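/- arXiv:1312.1744 — 11 statements merged into one kernel-verified Lean document; each statement's English description precedes it below -/
import Mathlib

section
/- Let p > 0 and let a < b be real numbers. For every measurable function f : [a,b] → (0,∞), ∫_a^b ((1/(x-a)) ∫_a^x f(y) dy)^{-p} dx ≤ ((p+1)/p)^p · ∫_a^b f(x)^{-p} dx (both sides possibly infinite). -/
/-!
Write `F x = ∫_a^x f`. Hölder's inequality with exponents `(p+1)/p` and `p+1`, applied to
`(y-a)^(1/p) = f^(p/(p+1)) · f^(-p/(p+1)) (y-a)^(1/p)`, gives the pointwise bound
`((x-a)⁻¹ F x)^(-p) ≤ ((p+1)/p)^(p+1) (x-a)^(-(2p+1)/p) ∫_a^x f(y)^(-p) (y-a)^((p+1)/p) dy`.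
After integrating in `x` and exchanging the order of integration, the inner integral
`∫_y^b (x-a)^(-(2p+1)/p) dx ≤ p/(p+1) · (y-a)^(-(p+1)/p)` cancels the weight `(y-a)^((p+1)/p)`
exactly, which leaves the constant `((p+1)/p)^(p+1) · p/(p+1) = ((p+1)/p)^p`.
-/

open MeasureTheory Set Interval
open scoped ENNReal

namespace ENNReal

theorem rpow_neg_le_of_rpow_le_rpow_mul {c F H : ℝ≥0∞} {p q : ℝ} (hp : 0 < p) (hc₀ : c ≠ 0)
    (hc : c ≠ ⊤) (h : c ^ q ≤ F ^ p * H) : F ^ (-p) ≤ c ^ (-q) * H := by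
  rcases eq_or_ne F ⊤ with rfl | hF
  · simp [top_rpow_of_neg (neg_neg_of_pos hp)]
  have hF₀ : F ≠ 0 := by
    rintro rfl
    simp [zero_rpow_of_pos hp, rpow_eq_zero_iff, hc₀, hc] at h
  have hFp₀ : F ^ p ≠ 0 := (rpow_pos (pos_iff_ne_zero.2 hF₀) hF).ne'
  have hFp : F ^ p ≠ ⊤ := rpow_ne_top_of_nonneg hp.le hF
  have hcq₀ : c ^ q ≠ 0 := by simp [rpow_eq_zero_iff, hc₀, hc]
  have hcq : c ^ q ≠ ⊤ := by simp [rpow_eq_top_iff, hc₀, hc]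
  rw [rpow_neg, rpow_neg, mul_comm, ← div_eq_mul_inv, ENNReal.le_div_iff_mul_le (.inl hcq₀)
    (.inl hcq), mul_comm, ← div_eq_mul_inv, ENNReal.div_le_iff hFp₀ hFp, mul_comm]
  exact h

end ENNReal

theorem lintegral_rpow_add_one_le_mul {α : Type*} [MeasurableSpace α] {μ : Measure α} {p : ℝ}
    (hp : 0 < p) {g v : α → ℝ≥0∞} (hg : AEMeasurable g μ) (hv : AEMeasurable v μ)
    (hg₀ : ∀ᵐ x ∂μ, g x ≠ 0) (hg_top : ∀ᵐ x ∂μ, g x ≠ ⊤) :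
    (∫⁻ x, v x ∂μ) ^ (p + 1) ≤ (∫⁻ x, g x ∂μ) ^ p * ∫⁻ x, g x ^ (-p) * v x ^ (p + 1) ∂μ := by
  have hp₁ : 0 < p + 1 := by linarith
  have hv_eq : (fun x => g x ^ (p / (p + 1)) * (g x ^ (-p) * v x ^ (p + 1)) ^ (1 / (p + 1)))
      =ᵐ[μ] v := by
    filter_upwards [hg₀, hg_top] with x hx₀ hx
    rw [ENNReal.mul_rpow_of_nonneg _ _ (by positivity), ← ENNReal.rpow_mul, ← ENNReal.rpow_mul,
      ← mul_assoc, ← ENNReal.rpow_add _ _ hx₀ hx]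
    field_simp
    simp
  have hw : AEMeasurable (fun x => g x ^ (-p) * v x ^ (p + 1)) μ :=
    (hg.pow_const _).mul (hv.pow_const _)
  have holder := ENNReal.lintegral_mul_norm_pow_le hg hw
    (by positivity : 0 ≤ p / (p + 1)) (by positivity : 0 ≤ 1 / (p + 1)) (by field_simp)
  rw [lintegral_congr_ae hv_eq] at holder
  calc (∫⁻ x, v x ∂μ) ^ (p + 1)
      ≤ ((∫⁻ x, g x ∂μ) ^ (p / (p + 1)) *
          (∫⁻ x, g x ^ (-p) * v x ^ (p + 1) ∂μ) ^ (1 / (p + 1))) ^ (p + 1) :=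
        ENNReal.rpow_le_rpow holder hp₁.le
    _ = _ := by
        rw [ENNReal.mul_rpow_of_nonneg _ _ hp₁.le, ← ENNReal.rpow_mul, ← ENNReal.rpow_mul]
        field_simp
        simp

theorem setLIntegral_Ioc_mul_setLIntegral_Ioc_swap {μ : Measure ℝ} [SFinite μ] {w g : ℝ → ℝ≥0∞}
    (hw : Measurable w) (hg : Measurable g) (a b : ℝ) :
    ∫⁻ x in Ioc a b, w x * ∫⁻ y in Ioc a x, g y ∂μ ∂μ
      = ∫⁻ y in Ioc a b, g y * ∫⁻ x in Icc y b, w x ∂μ ∂μ := by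
  have h_tri : MeasurableSet {z : ℝ × ℝ | z.2 ∈ Ioc a z.1} :=
    (measurableSet_lt measurable_const measurable_snd).inter
      (measurableSet_le measurable_snd measurable_fst)
  have hΦ : Measurable (Function.uncurry fun x y : ℝ =>
      (Ioc a b).indicator w x * (Ioc a x).indicator g y) :=
    ((hw.indicator measurableSet_Ioc).comp measurable_fst).mul
      ((hg.comp measurable_snd).indicator h_tri)
  have h_swap (x y : ℝ) : (Ioc a b).indicator w x * (Ioc a x).indicator g y
      = (Ioc a b).indicator g y * (Icc y b).indicator w x := by
    simp only [indicator_apply, mem_Ioc, mem_Icc, ite_zero_mul_ite_zero, mul_comm (w x)]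
    refine if_congr ?_ rfl rfl
    constructor
    · rintro ⟨⟨-, hxb⟩, hay, hyx⟩; exact ⟨⟨hay, hyx.trans hxb⟩, hyx, hxb⟩
    · rintro ⟨⟨hay, -⟩, hyx, hxb⟩; exact ⟨⟨hay.trans_le hyx, hxb⟩, hay, hyx⟩
  calc ∫⁻ x in Ioc a b, w x * ∫⁻ y in Ioc a x, g y ∂μ ∂μ
      = ∫⁻ x, ∫⁻ y, (Ioc a b).indicator w x * (Ioc a x).indicator g y ∂μ ∂μ := by
        rw [← lintegral_indicator measurableSet_Ioc]
        refine lintegral_congr fun x => ?_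
        rw [lintegral_const_mul _ (hg.indicator measurableSet_Ioc),
          lintegral_indicator measurableSet_Ioc, indicator_mul_left]
    _ = ∫⁻ y, ∫⁻ x, (Ioc a b).indicator g y * (Icc y b).indicator w x ∂μ ∂μ := by
        simp_rw [lintegral_lintegral_swap hΦ.aemeasurable, h_swap]
    _ = ∫⁻ y in Ioc a b, g y * ∫⁻ x in Icc y b, w x ∂μ ∂μ := by
        rw [← lintegral_indicator measurableSet_Ioc]
        refine lintegral_congr fun y => ?_
        rw [lintegral_const_mul _ (hw.indicator measurableSet_Icc),
          lintegral_indicator measurableSet_Icc, indicator_mul_left]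

theorem setLIntegral_Ioc_ofReal_sub_rpow {a y x r : ℝ} (hay : a ≤ y) (hyx : y ≤ x)
    (hr : -1 < r ∨ r ≠ -1 ∧ a < y) :
    ∫⁻ t in Ioc y x, ENNReal.ofReal (t - a) ^ r
      = ENNReal.ofReal (((x - a) ^ (r + 1) - (y - a) ^ (r + 1)) / (r + 1)) := by
  have hr' : -1 < r ∨ r ≠ -1 ∧ (0 : ℝ) ∉ [[y - a, x - a]] := by
    refine hr.imp_right (And.imp_right fun hay' h0 => ?_)
    rw [uIcc_of_le (by linarith)] at h0
    linarith [h0.1]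
  have h_int : IntervalIntegrable (fun t => (t - a) ^ r) volume y x := by
    have h := hr'.elim (intervalIntegral.intervalIntegrable_rpow' (a := y - a) (b := x - a))
      fun h => intervalIntegral.intervalIntegrable_rpow (.inr h.2)
    simpa using h.comp_sub_right a
  rw [setLIntegral_congr_fun measurableSet_Ioc fun t ht =>
      ENNReal.ofReal_rpow_of_pos (sub_pos.2 (hay.trans_lt ht.1)),
    ← ofReal_integral_eq_lintegral_ofReal
      ((intervalIntegrable_iff_integrableOn_Ioc_of_le hyx).1 h_int)
      ((ae_restrict_iff' measurableSet_Ioc).2 (.of_forall fun t ht =>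
        Real.rpow_nonneg (by linarith [ht.1]) r)),
    ← intervalIntegral.integral_of_le hyx, intervalIntegral.integral_comp_sub_right
      (fun t => t ^ r), integral_rpow hr']

theorem rpow_mul_setLIntegral_Icc_ofReal_sub_rpow_le {a y b s : ℝ} (hs : 0 < s) (hay : a < y) :
    ENNReal.ofReal (y - a) ^ s * ∫⁻ t in Icc y b, ENNReal.ofReal (t - a) ^ (-(s + 1))
      ≤ ENNReal.ofReal s⁻¹ := by
  rw [← setLIntegral_congr Ioc_ae_eq_Icc]
  rcases le_or_gt y b with hyb | hby
  · have ht : 0 < y - a := sub_pos.2 hay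
    rw [setLIntegral_Ioc_ofReal_sub_rpow hay.le hyb (.inr ⟨by linarith, hay⟩),
      ENNReal.ofReal_rpow_of_pos ht, ← ENNReal.ofReal_mul (by positivity),
      show -(s + 1) + 1 = -s by ring, Real.rpow_neg ht.le]
    refine ENNReal.ofReal_le_ofReal ?_
    have hys : 0 < (y - a) ^ s := by positivity
    have hbs : 0 ≤ (b - a) ^ (-s) := Real.rpow_nonneg (by linarith) _
    field_simp
    nlinarith
  · simp [Ioc_eq_empty_of_le hby.le]

theorem inv_mul_setLIntegral_Ioc_rpow_neg_le {p a x : ℝ} (hp : 0 < p) (hax : a < x)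
    {f : ℝ → ℝ} (hf : Measurable f) (hf_pos : ∀ y ∈ Ioc a x, 0 < f y) :
    ((ENNReal.ofReal (x - a))⁻¹ * ∫⁻ y in Ioc a x, ENNReal.ofReal (f y)) ^ (-p)
      ≤ ENNReal.ofReal (((p + 1) / p) ^ (p + 1)) *
        (ENNReal.ofReal (x - a) ^ (-((p + 1) / p + 1)) *
          ∫⁻ y in Ioc a x,
            ENNReal.ofReal (f y) ^ (-p) * ENNReal.ofReal (y - a) ^ ((p + 1) / p)) := by
  set s := (p + 1) / p with hs_def
  have hs : 0 < s := by positivity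
  have ht : 0 < x - a := sub_pos.2 hax
  set c := ENNReal.ofReal ((x - a) ^ s / s) with hc_def
  have hc : 0 < (x - a) ^ s / s := by positivity
  have h_weight : ∫⁻ y in Ioc a x, ENNReal.ofReal (y - a) ^ (1 / p) = c := by
    rw [setLIntegral_Ioc_ofReal_sub_rpow le_rfl hax.le (.inl (by linarith [one_div_pos.2 hp])),
      sub_self, Real.zero_rpow (by positivity), sub_zero,
      show 1 / p + 1 = s by rw [hs_def]; field_simp; ring]
  have holder := lintegral_rpow_add_one_le_mul hp (μ := volume.restrict (Ioc a x))
    hf.ennreal_ofReal.aemeasurable (v := fun y => ENNReal.ofReal (y - a) ^ (1 / p))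
    (by fun_prop)
    ((ae_restrict_iff' measurableSet_Ioc).2 (.of_forall fun y hy => by simpa using hf_pos y hy))
    (.of_forall fun _ => ENNReal.ofReal_ne_top)
  simp_rw [← ENNReal.rpow_mul, show 1 / p * (p + 1) = s by rw [hs_def]; field_simp,
    h_weight] at holder
  have h_inv := ENNReal.rpow_neg_le_of_rpow_le_rpow_mul hp (by simpa using hc)
    ENNReal.ofReal_ne_top holder
  have hu₀ : ENNReal.ofReal (x - a) ≠ 0 := by simpa using ht
  calc ((ENNReal.ofReal (x - a))⁻¹ * ∫⁻ y in Ioc a x, ENNReal.ofReal (f y)) ^ (-p)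
      = ENNReal.ofReal (x - a) ^ p * (∫⁻ y in Ioc a x, ENNReal.ofReal (f y)) ^ (-p) := by
        simp [ENNReal.mul_rpow_eq_ite, hu₀, ENNReal.inv_rpow, ← ENNReal.rpow_neg]
    _ ≤ ENNReal.ofReal (x - a) ^ p * (c ^ (-(p + 1)) *
          ∫⁻ y in Ioc a x, ENNReal.ofReal (f y) ^ (-p) * ENNReal.ofReal (y - a) ^ s) :=
        mul_le_mul_right h_inv _
    _ = _ := by
        rw [← mul_assoc, ← mul_assoc]
        congr 1
        rw [hc_def, ENNReal.ofReal_rpow_of_pos ht, ENNReal.ofReal_rpow_of_pos ht,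
          ENNReal.ofReal_rpow_of_pos hc, ← ENNReal.ofReal_mul (by positivity),
          ← ENNReal.ofReal_mul (by positivity)]
        congr 1
        rw [Real.rpow_neg hc.le, ← Real.inv_rpow hc.le, inv_div,
          Real.div_rpow hs.le (by positivity), ← Real.rpow_mul ht.le, mul_div_left_comm,
          ← Real.rpow_sub ht,
          show p - s * (p + 1) = -(s + 1) by rw [hs_def]; field_simp; ring]

theorem hardy_negative_exponent_general (p a b : ℝ) (hp : 0 < p)
    (f : ℝ → ℝ) (hfm : Measurable f)
    (hfpos : ∀ x ∈ Set.Icc a b, 0 < f x) :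
    (∫⁻ x in Set.Ioc a b,
        ((ENNReal.ofReal (x - a))⁻¹ * ∫⁻ y in Set.Ioc a x, ENNReal.ofReal (f y)) ^ (-p))
      ≤ ENNReal.ofReal (((p + 1) / p) ^ p) *
        ∫⁻ x in Set.Ioc a b, (ENNReal.ofReal (f x)) ^ (-p) := by
  set s := (p + 1) / p
  have hs : 0 < s := by positivity
  calc (∫⁻ x in Ioc a b,
        ((ENNReal.ofReal (x - a))⁻¹ * ∫⁻ y in Ioc a x, ENNReal.ofReal (f y)) ^ (-p))
      ≤ ∫⁻ x in Ioc a b, ENNReal.ofReal (s ^ (p + 1)) * (ENNReal.ofReal (x - a) ^ (-(s + 1)) *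
          ∫⁻ y in Ioc a x, ENNReal.ofReal (f y) ^ (-p) * ENNReal.ofReal (y - a) ^ s) :=
        setLIntegral_mono' measurableSet_Ioc fun x hx => inv_mul_setLIntegral_Ioc_rpow_neg_le hp
          hx.1 hfm fun y hy => hfpos y ⟨hy.1.le, hy.2.trans hx.2⟩
    _ = ENNReal.ofReal (s ^ (p + 1)) * ∫⁻ y in Ioc a b,
          ENNReal.ofReal (f y) ^ (-p) * ENNReal.ofReal (y - a) ^ s *
            ∫⁻ x in Icc y b, ENNReal.ofReal (x - a) ^ (-(s + 1)) := by
        rw [lintegral_const_mul' _ _ ENNReal.ofReal_ne_top,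
          setLIntegral_Ioc_mul_setLIntegral_Ioc_swap (by fun_prop) (by fun_prop)]
    _ ≤ ENNReal.ofReal (s ^ (p + 1)) * ∫⁻ y in Ioc a b,
          ENNReal.ofReal (f y) ^ (-p) * ENNReal.ofReal s⁻¹ := by
        refine mul_le_mul_right (setLIntegral_mono' measurableSet_Ioc fun y hy => ?_) _
        rw [mul_assoc]
        gcongr
        exact rpow_mul_setLIntegral_Icc_ofReal_sub_rpow_le hs hy.1
    _ = ENNReal.ofReal (s ^ p) * ∫⁻ x in Ioc a b, ENNReal.ofReal (f x) ^ (-p) := by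
        rw [lintegral_mul_const' _ _ ENNReal.ofReal_ne_top, mul_comm _ (ENNReal.ofReal s⁻¹),
          ← mul_assoc, ← ENNReal.ofReal_mul (by positivity), Real.rpow_add_one hs.ne',
          mul_inv_cancel_right₀ hs.ne']

/-- **Theorem D (Hardy-type inequality for negative exponents).**
For `p > 0`, `a < b`, and a measurable `f : [a,b] → (0,∞)`,
`∫_a^b ((1/(x-a)) ∫_a^x f)^{-p} dx ≤ ((p+1)/p)^p ∫_a^b f(x)^{-p} dx`,
both sides interpreted in `[0,∞]`. -/
theorem hardy_negative_exponent (p a b : ℝ) (hp : 0 < p) (hab : a < b)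
    (f : ℝ → ℝ) (hfm : Measurable f)
    (hfpos : ∀ x ∈ Set.Icc a b, 0 < f x) :
    (∫⁻ x in Set.Ioc a b,
        ((ENNReal.ofReal (x - a))⁻¹ * ∫⁻ y in Set.Ioc a x, ENNReal.ofReal (f y)) ^ (-p))
      ≤ ENNReal.ofReal (((p + 1) / p) ^ p) *
        ∫⁻ x in Set.Ioc a b, (ENNReal.ofReal (f x)) ^ (-p) :=
  hardy_negative_exponent_general p a b hp f hfm hfpos
end

section
/- Let p ≥ q > 0 and let (a_n)_{n≥1} and (λ_n)_{n≥1} be sequences of positive real numbers. Set Λ_n = λ_1 + ⋯ + λ_n and A_n = λ_1 a_1 + ⋯ + λ_n a_n. Then ∑_{n=1}^∞ λ_n (A_n/Λ_n)^{-p} ≤ ((p+1)/p)^q · ∑_{n=1}^∞ λ_n (A_n/Λ_n)^{-p+q} a_n^{-q}, where both sides are allowed to be infinite. -/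
/-!
Write `cₙ = Aₙ / Λₙ`. Both steps rest on the convexity of `x ↦ x ^ (-r)`, in the Bernoulli form
`t ^ (-r) ≥ 1 + r - r t`. Its tangent-line version at `cₙ`, evaluated at `cₙ₋₁`, makes
`Λₙ cₙ ^ (-p) + p ∑_{k ≤ n} λₖ aₖ cₖ ^ (-p-1) ≤ (1 + p) ∑_{k ≤ n} λₖ cₖ ^ (-p)` telescope.
Applied with `r = q` and `t = p aₙ / ((p + 1) cₙ)` it gives, termwise,
`(1 + q) λₙ cₙ ^ (-p) ≤ q p / (p + 1) · λₙ aₙ cₙ ^ (-p-1) + ((p + 1) / p) ^ q λₙ cₙ ^ (-p+q) aₙ ^ (-q)`.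
Summing and absorbing the first sum on the right with the telescoped bound proves the inequality
for every partial sum, hence for the series in `[0, ∞]`.
-/

open Finset Real

theorem one_add_le_mul_add_rpow_neg {r t : ℝ} (hr : 0 ≤ r) (ht : 0 < t) :
    1 + r ≤ r * t + t ^ (-r) := by
  have ht' : 0 < t⁻¹ := inv_pos.2 ht
  have h := one_add_mul_self_le_rpow_one_add (s := t⁻¹ - 1) (by linarith) (p := 1 + r)
    (by linarith)
  rw [add_sub_cancel, rpow_add ht', rpow_one, inv_rpow ht.le, ← rpow_neg ht.le] at h
  have h' := mul_le_mul_of_nonneg_left h ht.le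
  rw [← mul_assoc, mul_inv_cancel₀ ht.ne', one_mul] at h'
  have : t * (1 + (1 + r) * (t⁻¹ - 1)) = 1 + r - r * t := by field_simp; ring
  linarith

theorem rpow_neg_sub_one_mul_self {p x : ℝ} (hx : 0 < x) : x ^ (-p - 1) * x = x ^ (-p) := by
  rw [← rpow_add_one hx.ne']; ring_nf

theorem rpow_neg_add_mul_sub_le {p x y : ℝ} (hp : 0 ≤ p) (hx : 0 < x) (hy : 0 < y) :
    x ^ (-p) + p * x ^ (-p - 1) * (x - y) ≤ y ^ (-p) := by
  have h := mul_le_mul_of_nonneg_left (one_add_le_mul_add_rpow_neg hp (div_pos hy hx))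
    (rpow_nonneg hx.le (-p))
  have hx1 := rpow_neg_sub_one_mul_self (p := p) hx
  have hy1 : x ^ (-p) * (y / x) ^ (-p) = y ^ (-p) := by
    rw [← mul_rpow hx.le (div_pos hy hx).le, mul_div_cancel₀ y hx.ne']
  have hy2 : x ^ (-p) * (y / x) = x ^ (-p - 1) * y := by
    rw [← hx1]; field_simp
  linear_combination h + p * hy2 + hy1 + p * hx1

theorem one_add_mul_rpow_neg_le {p q x y : ℝ} (hp : 0 < p) (hq : 0 ≤ q) (hx : 0 < x)
    (hy : 0 < y) :
    (1 + q) * x ^ (-p) ≤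
      q * (p / (p + 1)) * (y * x ^ (-p - 1)) + ((p + 1) / p) ^ q * (x ^ (-p + q) * y ^ (-q)) := by
  have hC : 0 < (p + 1) / p := by positivity
  have h := mul_le_mul_of_nonneg_left
    (one_add_le_mul_add_rpow_neg hq (div_pos (div_pos hy hx) hC)) (rpow_nonneg hx.le (-p))
  have h1 : x ^ (-p) * (y / x / ((p + 1) / p)) = p / (p + 1) * (y * x ^ (-p - 1)) := by
    rw [← rpow_neg_sub_one_mul_self (p := p) hx]; field_simp
  have h2 : x ^ (-p) * (y / x / ((p + 1) / p)) ^ (-q) =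
      ((p + 1) / p) ^ q * (x ^ (-p + q) * y ^ (-q)) := by
    rw [div_rpow (div_pos hy hx).le hC.le, div_rpow hy.le hx.le, rpow_neg hC.le,
      rpow_neg hx.le q, rpow_add hx]
    field_simp
  linear_combination h + q * h1 + h2

theorem mean_rpow_neg_step {p L A lam b : ℝ} (hp : 0 ≤ p) (hL : 0 < L) (hA : 0 < A)
    (hlam : 0 < lam) (hb : 0 < b) :
    (L + lam) * ((A + lam * b) / (L + lam)) ^ (-p)
        + p * lam * b * ((A + lam * b) / (L + lam)) ^ (-p - 1)
      ≤ (1 + p) * lam * ((A + lam * b) / (L + lam)) ^ (-p) + L * (A / L) ^ (-p) := by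
  generalize hc : (A + lam * b) / (L + lam) = c
  have hc_pos : 0 < c := hc ▸ by positivity
  have hLc : (L + lam) * c = A + lam * b := hc ▸ mul_div_cancel₀ _ (by positivity)
  have hLA : L * (A / L) = A := mul_div_cancel₀ _ hL.ne'
  have h := mul_le_mul_of_nonneg_left (rpow_neg_add_mul_sub_le hp hc_pos (div_pos hA hL)) hL.le
  linear_combination h + p * lam * rpow_neg_sub_one_mul_self (p := p) hc_pos
    - p * c ^ (-p - 1) * hLc + p * c ^ (-p - 1) * hLA

/-- `weightedMean l a n` is `Aₙ₊₁ / Λₙ₊₁` in the paper's indexing, which starts at `1`. -/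
noncomputable def weightedMean (l a : ℕ → ℝ) (n : ℕ) : ℝ :=
  (∑ i ∈ range (n + 1), l i * a i) / ∑ i ∈ range (n + 1), l i

section WeightedMean

variable {l a : ℕ → ℝ} {p q : ℝ}

theorem weightedMean_pos (hl : ∀ n, 0 < l n) (ha : ∀ n, 0 < a n) (n : ℕ) :
    0 < weightedMean l a n :=
  div_pos (sum_pos (fun i _ => mul_pos (hl i) (ha i)) nonempty_range_add_one)
    (sum_pos (fun i _ => hl i) nonempty_range_add_one)

theorem sum_mul_rpow_neg_weightedMean_add_le (hp : 0 ≤ p) (hl : ∀ n, 0 < l n)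
    (ha : ∀ n, 0 < a n) (N : ℕ) :
    (∑ i ∈ range (N + 1), l i) * weightedMean l a N ^ (-p)
        + p * ∑ n ∈ range (N + 1), l n * a n * weightedMean l a n ^ (-p - 1)
      ≤ (1 + p) * ∑ n ∈ range (N + 1), l n * weightedMean l a n ^ (-p) := by
  induction N with
  | zero =>
    have h0 : weightedMean l a 0 = a 0 := by
      simp [weightedMean, mul_div_cancel_left₀ _ (hl 0).ne']
    simp only [zero_add, sum_range_one, h0]
    linear_combination p * l 0 * rpow_neg_sub_one_mul_self (p := p) (ha 0)
  | succ N ih =>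
    have hmean : weightedMean l a (N + 1) =
        ((∑ i ∈ range (N + 1), l i * a i) + l (N + 1) * a (N + 1)) /
          ((∑ i ∈ range (N + 1), l i) + l (N + 1)) := by
      rw [weightedMean, sum_range_succ _ (N + 1), sum_range_succ _ (N + 1)]
    have hL : 0 < ∑ i ∈ range (N + 1), l i := sum_pos (fun i _ => hl i) nonempty_range_add_one
    have hA : 0 < ∑ i ∈ range (N + 1), l i * a i :=
      sum_pos (fun i _ => mul_pos (hl i) (ha i)) nonempty_range_add_one
    have step := mean_rpow_neg_step hp hL hA (hl (N + 1)) (ha (N + 1))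
    rw [← hmean, show (∑ i ∈ range (N + 1), l i * a i) / (∑ i ∈ range (N + 1), l i) =
      weightedMean l a N from rfl] at step
    rw [sum_range_succ _ (N + 1), sum_range_succ _ (N + 1), sum_range_succ _ (N + 1)]
    linarith

theorem mul_sum_mul_rpow_neg_sub_one_weightedMean_le (hp : 0 ≤ p) (hl : ∀ n, 0 < l n)
    (ha : ∀ n, 0 < a n) (N : ℕ) :
    p * ∑ n ∈ range N, l n * a n * weightedMean l a n ^ (-p - 1)
      ≤ (1 + p) * ∑ n ∈ range N, l n * weightedMean l a n ^ (-p) := by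
  cases N with
  | zero => simp
  | succ N =>
    have h := sum_mul_rpow_neg_weightedMean_add_le hp hl ha N
    have h0 : 0 ≤ (∑ i ∈ range (N + 1), l i) * weightedMean l a N ^ (-p) :=
      mul_nonneg (sum_nonneg fun i _ => (hl i).le) (rpow_nonneg (weightedMean_pos hl ha N).le _)
    linarith

theorem sum_mul_rpow_neg_weightedMean_le (hp : 0 < p) (hq : 0 ≤ q) (hl : ∀ n, 0 < l n)
    (ha : ∀ n, 0 < a n) (N : ℕ) :
    ∑ n ∈ range N, l n * weightedMean l a n ^ (-p)
      ≤ ((p + 1) / p) ^ q *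
        ∑ n ∈ range N, l n * weightedMean l a n ^ (-p + q) * a n ^ (-q) := by
  have hpointwise : (1 + q) * ∑ n ∈ range N, l n * weightedMean l a n ^ (-p)
      ≤ q * (p / (p + 1)) * ∑ n ∈ range N, l n * a n * weightedMean l a n ^ (-p - 1)
        + ((p + 1) / p) ^ q *
          ∑ n ∈ range N, l n * weightedMean l a n ^ (-p + q) * a n ^ (-q) := by
    simp only [mul_sum, ← sum_add_distrib]
    refine sum_le_sum fun n _ => ?_
    linear_combination mul_le_mul_of_nonneg_left
      (one_add_mul_rpow_neg_le hp hq (weightedMean_pos hl ha n) (ha n)) (hl n).le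
  have htelescope : p / (p + 1) * ∑ n ∈ range N, l n * a n * weightedMean l a n ^ (-p - 1)
      ≤ ∑ n ∈ range N, l n * weightedMean l a n ^ (-p) := by
    rw [div_mul_eq_mul_div, div_le_iff₀ (by positivity)]
    linarith [mul_sum_mul_rpow_neg_sub_one_weightedMean_le hp.le hl ha N]
  linear_combination hpointwise + mul_le_mul_of_nonneg_left htelescope hq

end WeightedMean

theorem tsum_ofReal_le_ofReal_mul_tsum_ofReal {f g : ℕ → ℝ} {C : ℝ} (hf : ∀ n, 0 ≤ f n)
    (hg : ∀ n, 0 ≤ g n) (hC : 0 ≤ C)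
    (h : ∀ N, ∑ n ∈ range N, f n ≤ C * ∑ n ∈ range N, g n) :
    ∑' n, ENNReal.ofReal (f n) ≤ ENNReal.ofReal C * ∑' n, ENNReal.ofReal (g n) := by
  refine ENNReal.tsum_le_of_sum_range_le fun N => ?_
  calc ∑ n ∈ range N, ENNReal.ofReal (f n)
      = ENNReal.ofReal (∑ n ∈ range N, f n) :=
        (ENNReal.ofReal_sum_of_nonneg fun n _ => hf n).symm
    _ ≤ ENNReal.ofReal C * ENNReal.ofReal (∑ n ∈ range N, g n) := by
      rw [← ENNReal.ofReal_mul hC]; exact ENNReal.ofReal_le_ofReal (h N)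
    _ ≤ ENNReal.ofReal C * ∑' n, ENNReal.ofReal (g n) := by
      rw [ENNReal.ofReal_sum_of_nonneg fun n _ => hg n]
      gcongr
      exact ENNReal.sum_le_tsum _

/-- **Theorem 2.** For `p ≥ q > 0` and positive sequences `(aₙ)`, `(λₙ)`, with
`Λₙ = λ₁ + ⋯ + λₙ` and `Aₙ = λ₁a₁ + ⋯ + λₙaₙ`,
`∑ λₙ (Aₙ/Λₙ)^{-p} ≤ ((p+1)/p)^q ∑ λₙ (Aₙ/Λₙ)^{-p+q} aₙ^{-q}`,
both sides taken in `[0,∞]`. -/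
theorem copson_negative_exponent (p q : ℝ) (hq : 0 < q) (hpq : q ≤ p)
    (a l : ℕ → ℝ) (ha : ∀ n, 0 < a n) (hl : ∀ n, 0 < l n) :
    (∑' n : ℕ, ENNReal.ofReal (l n *
        ((∑ i ∈ Finset.range (n + 1), l i * a i) / (∑ i ∈ Finset.range (n + 1), l i)) ^ (-p)))
      ≤ ENNReal.ofReal (((p + 1) / p) ^ q) *
        ∑' n : ℕ, ENNReal.ofReal (l n *
          ((∑ i ∈ Finset.range (n + 1), l i * a i) / (∑ i ∈ Finset.range (n + 1), l i)) ^ (-p + q)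
            * (a n) ^ (-q)) := by
  have hp : 0 < p := hq.trans_le hpq
  have hmean := weightedMean_pos hl ha
  exact tsum_ofReal_le_ofReal_mul_tsum_ofReal
    (fun n => (mul_pos (hl n) (rpow_pos_of_pos (hmean n) _)).le)
    (fun n => (mul_pos (mul_pos (hl n) (rpow_pos_of_pos (hmean n) _))
      (rpow_pos_of_pos (ha n) _)).le)
    (rpow_nonneg (by positivity) q)
    (sum_mul_rpow_neg_weightedMean_le hp hq.le hl ha)
end

section
/- Let p ≥ q > 0, let N be a positive integer, and let a_1,…,a_N and λ_1,…,λ_N be positive real numbers. Set Λ_n = λ_1 + ⋯ + λ_n and A_n = λ_1 a_1 + ⋯ + λ_n a_n for 1 ≤ n ≤ N. Then ∑_{n=1}^N λ_n (A_n/Λ_n)^{-p} ≤ ((p+1)/p)^q · ∑_{n=1}^N λ_n (A_n/Λ_n)^{-p+q} a_n^{-q}. -/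
/-!
Write `xₙ = Aₙ/Λₙ`. The quantity `Λₙ xₙ^{-p}` telescopes: the tangent line of the convex
function `t ↦ t^{-p}` at `xₙ`, evaluated at `xₙ₋₁`, bounds its increment by
`(1+p) λₙ xₙ^{-p} - p λₙ aₙ xₙ^{-p-1}`. Young's inequality (weighted AM-GM) gives
`(1+q)(p+1) xₙ^{-p} ≤ pq aₙ xₙ^{-p-1} + (p+1)((p+1)/p)^q xₙ^{-p+q} aₙ^{-q}`. Adding `q` times the
first bound to `λₙ` times the second, the `aₙ xₙ^{-p-1}` terms cancel; summing over `n`, the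
telescoped term `q Λ_N x_N^{-p} ≥ 0` can be dropped.
-/

open Finset Real

lemma one_add_le_rpow_neg_add_mul {r s : ℝ} (hr : 0 ≤ r) (hs : 0 < s) :
    1 + r ≤ s ^ (-r) + r * s := by
  have h1r : 0 < 1 + r := by linarith
  have hgm := geom_mean_le_arith_mean2_weighted (w₁ := 1 / (1 + r)) (w₂ := r / (1 + r))
    (by positivity) (by positivity) (rpow_nonneg hs.le (-r)) hs.le (by field_simp)
  rw [← rpow_mul hs.le, ← rpow_add hs, show -r * (1 / (1 + r)) + r / (1 + r) = 0 by ring,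
    rpow_zero] at hgm
  calc 1 + r = (1 + r) * 1 := by ring
    _ ≤ (1 + r) * (1 / (1 + r) * s ^ (-r) + r / (1 + r) * s) := by gcongr
    _ = s ^ (-r) + r * s := by field_simp

lemma rpow_neg_tangent_le {r x y : ℝ} (hr : 0 ≤ r) (hx : 0 < x) (hy : 0 < y) :
    (1 + r) * x ^ (-r) - r * x ^ (-r - 1) * y ≤ y ^ (-r) := by
  have h := mul_le_mul_of_nonneg_right (one_add_le_rpow_neg_add_mul hr (div_pos hy hx))
    (rpow_pos_of_pos hx (-r)).le
  rw [div_rpow hy.le hx.le] at h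
  rw [rpow_sub_one hx.ne']
  have hX : x ^ (-r) ≠ 0 := (rpow_pos_of_pos hx (-r)).ne'
  calc (1 + r) * x ^ (-r) - r * (x ^ (-r) / x) * y ≤
      (y ^ (-r) / x ^ (-r) + r * (y / x)) * x ^ (-r) - r * (x ^ (-r) / x) * y := by linarith
    _ = y ^ (-r) := by field_simp; ring

/-- `L = 0` is allowed so that the empty partial sum `Λ₀ = A₀ = 0` is covered. -/
lemma tangent_le_mul_div_rpow_neg {p x L A : ℝ} (hp : 0 ≤ p) (hx : 0 < x) (hL : 0 ≤ L)
    (hA : 0 ≤ A) (hLA : 0 < L → 0 < A) :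
    (1 + p) * L * x ^ (-p) - p * x ^ (-p - 1) * A ≤ L * (A / L) ^ (-p) := by
  rcases hL.eq_or_lt with rfl | hL
  · have : 0 ≤ p * x ^ (-p - 1) * A := by positivity
    simpa using this
  · have h := mul_le_mul_of_nonneg_left
      (rpow_neg_tangent_le hp hx (div_pos (hLA hL) hL)) hL.le
    calc (1 + p) * L * x ^ (-p) - p * x ^ (-p - 1) * A
        = L * ((1 + p) * x ^ (-p) - p * x ^ (-p - 1) * (A / L)) := by field_simp
      _ ≤ L * (A / L) ^ (-p) := h

lemma mul_div_rpow_neg_increment_le {p L A L' A' lam a : ℝ} (hp : 0 ≤ p) (hL : 0 ≤ L)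
    (hA : 0 ≤ A) (hLA : 0 < L → 0 < A) (hlam : 0 < lam) (ha : 0 < a)
    (hL' : L' = L + lam) (hA' : A' = A + lam * a) :
    L' * (A' / L') ^ (-p) - L * (A / L) ^ (-p)
      ≤ (1 + p) * lam * (A' / L') ^ (-p) - p * lam * a * (A' / L') ^ (-p - 1) := by
  have hL'pos : 0 < L' := by rw [hL']; linarith
  have hA'pos : 0 < A' := by rw [hA']; positivity
  have hx : 0 < A' / L' := div_pos hA'pos hL'pos
  have hxA' : (A' / L') ^ (-p - 1) * A' = L' * (A' / L') ^ (-p) := by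
    rw [rpow_sub_one hx.ne']
    field_simp
  linear_combination tangent_le_mul_div_rpow_neg hp hx hL hA hLA + p * hxA'
    - p * (A' / L') ^ (-p - 1) * hA' + (1 + p) * (A' / L') ^ (-p) * hL'

lemma young_rpow_neg {p q x a : ℝ} (hp : 0 < p) (hq : 0 ≤ q) (hx : 0 < x) (ha : 0 < a) :
    (1 + q) * (p + 1) * x ^ (-p)
      ≤ p * q * a * x ^ (-p - 1) + (p + 1) * ((p + 1) / p) ^ q * x ^ (-p + q) * a ^ (-q) := by
  have h := one_add_le_rpow_neg_add_mul hq (show 0 < p / (p + 1) * (a / x) by positivity)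
  have hs : (p / (p + 1) * (a / x)) ^ (-q) = ((p + 1) / p) ^ q * a ^ (-q) * x ^ q := by
    rw [mul_rpow (by positivity) (by positivity), div_rpow ha.le hx.le, rpow_neg (by positivity),
      ← inv_rpow (by positivity), inv_div, rpow_neg hx.le]
    field_simp
  rw [hs] at h
  have h' := mul_le_mul_of_nonneg_left h (show 0 ≤ (p + 1) * x ^ (-p) by positivity)
  rw [rpow_sub_one hx.ne', rpow_add hx]
  calc (1 + q) * (p + 1) * x ^ (-p) = (p + 1) * x ^ (-p) * (1 + q) := by ring
    _ ≤ _ := h'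
    _ = _ := by field_simp; ring

lemma copson_term_le {p q L A L' A' lam a : ℝ} (hp : 0 < p) (hq : 0 ≤ q) (hL : 0 ≤ L)
    (hA : 0 ≤ A) (hLA : 0 < L → 0 < A) (hlam : 0 < lam) (ha : 0 < a)
    (hL' : L' = L + lam) (hA' : A' = A + lam * a) :
    (p + 1) * (lam * (A' / L') ^ (-p)) + q * (L' * (A' / L') ^ (-p) - L * (A / L) ^ (-p))
      ≤ (p + 1) * (((p + 1) / p) ^ q * (lam * (A' / L') ^ (-p + q) * a ^ (-q))) := by
  have hx : 0 < A' / L' := div_pos (by rw [hA']; positivity) (by rw [hL']; positivity)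
  linear_combination q * mul_div_rpow_neg_increment_le hp.le hL hA hLA hlam ha hL' hA'
    + lam * young_rpow_neg hp hq hx ha

theorem copson_negative_exponent_finite_general (p q : ℝ) (hq : 0 < q) (hpq : q ≤ p)
    (N : ℕ) (a l : ℕ → ℝ)
    (ha : ∀ n < N, 0 < a n) (hl : ∀ n < N, 0 < l n) :
    (∑ n ∈ Finset.range N, l n *
        ((∑ i ∈ Finset.range (n + 1), l i * a i) / (∑ i ∈ Finset.range (n + 1), l i)) ^ (-p))
      ≤ ((p + 1) / p) ^ q *
        ∑ n ∈ Finset.range N, l n *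
          ((∑ i ∈ Finset.range (n + 1), l i * a i) / (∑ i ∈ Finset.range (n + 1), l i)) ^ (-p + q)
            * (a n) ^ (-q) := by
  have hp : 0 < p := hq.trans_le hpq
  have hpos : ∀ n ≤ N, ∀ i ∈ range n, 0 < l i ∧ 0 < a i := fun n hn i hi =>
    ⟨hl i (by grind), ha i (by grind)⟩
  have hΛ : ∀ n ≤ N, 0 ≤ ∑ i ∈ range n, l i := fun n hn =>
    sum_nonneg fun i hi => (hpos n hn i hi).1.le
  have hA : ∀ n ≤ N, 0 ≤ ∑ i ∈ range n, l i * a i := fun n hn =>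
    sum_nonneg fun i hi => (mul_pos (hpos n hn i hi).1 (hpos n hn i hi).2).le
  have hΛA : ∀ n ≤ N, 0 < ∑ i ∈ range n, l i → 0 < ∑ i ∈ range n, l i * a i := fun n hn h =>
    sum_pos (fun i hi => mul_pos (hpos n hn i hi).1 (hpos n hn i hi).2)
      (nonempty_of_sum_ne_zero h.ne')
  let g : ℕ → ℝ := fun k =>
    (∑ i ∈ range k, l i) * ((∑ i ∈ range k, l i * a i) / ∑ i ∈ range k, l i) ^ (-p)
  have hterm := sum_le_sum fun n (hn : n ∈ range N) =>
    have hn : n < N := mem_range.1 hn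
    copson_term_le hp hq.le (hΛ n hn.le) (hA n hn.le) (hΛA n hn.le) (hl n hn) (ha n hn)
      (sum_range_succ l n) (sum_range_succ (fun i => l i * a i) n)
  have hg0 : g 0 = 0 := by simp [g]
  rw [sum_add_distrib, ← mul_sum, ← mul_sum, ← mul_sum, ← mul_sum, sum_range_sub g, hg0] at hterm
  have hgN : 0 ≤ g N :=
    mul_nonneg (hΛ N le_rfl) (rpow_nonneg (div_nonneg (hA N le_rfl) (hΛ N le_rfl)) _)
  exact le_of_mul_le_mul_left (by linarith [mul_nonneg hq.le hgN]) (by linarith : 0 < p + 1)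

/-- **Theorem 2, finite form (inequality (2.1)).** For `p ≥ q > 0`, `N ≥ 1` and positive
reals `a₁,…,a_N`, `λ₁,…,λ_N`, with `Λₙ = λ₁ + ⋯ + λₙ` and `Aₙ = λ₁a₁ + ⋯ + λₙaₙ`,
`∑_{n=1}^N λₙ (Aₙ/Λₙ)^{-p} ≤ ((p+1)/p)^q ∑_{n=1}^N λₙ (Aₙ/Λₙ)^{-p+q} aₙ^{-q}`. -/
theorem copson_negative_exponent_finite (p q : ℝ) (hq : 0 < q) (hpq : q ≤ p)
    (N : ℕ) (hN : 0 < N) (a l : ℕ → ℝ)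
    (ha : ∀ n < N, 0 < a n) (hl : ∀ n < N, 0 < l n) :
    (∑ n ∈ Finset.range N, l n *
        ((∑ i ∈ Finset.range (n + 1), l i * a i) / (∑ i ∈ Finset.range (n + 1), l i)) ^ (-p))
      ≤ ((p + 1) / p) ^ q *
        ∑ n ∈ Finset.range N, l n *
          ((∑ i ∈ Finset.range (n + 1), l i * a i) / (∑ i ∈ Finset.range (n + 1), l i)) ^ (-p + q)
            * (a n) ^ (-q) :=
  copson_negative_exponent_finite_general p q hq hpq N a l ha hl
end

section
/- Let p > 0 and let 0 < q_1 ≤ q_2 ≤ p. Let (a_n)_{n≥1} and (λ_n)_{n≥1} be sequences of positive real numbers, and set Λ_n = λ_1 + ⋯ + λ_n and A_n = λ_1 a_1 + ⋯ + λ_n a_n. Then ∑_{n=1}^∞ λ_n (A_n/Λ_n)^{-p+q_1} a_n^{-q_1} ≤ ((p+1)/p)^{q_2 - q_1} · ∑_{n=1}^∞ λ_n (A_n/Λ_n)^{-p+q_2} a_n^{-q_2}, where both sides are allowed to be infinite. -/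
open Finset

/-!
Put `mₙ = Aₙ/Λₙ`, `wₙ = λₙ mₙ^{-p}` and `xₙ = aₙ/mₙ`, so that `λₙ mₙ^{-p+q} aₙ^{-q} = wₙ xₙ^{-q}`.
Since `Λₙ mₙ = Aₙ`, the tangent line of the convex function `t ↦ t^{-p}` at `mₙ` gives
`Λₙ mₙ^{-p} + p wₙ xₙ ≤ Λₙ₋₁ mₙ₋₁^{-p} + (p+1) wₙ`; telescoping yields the Copson-type bound
`∑ wₙ xₙ ≤ C ∑ wₙ` with `C = (p+1)/p` for every partial sum. The tangent lines of `t ↦ t^{-q}`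
(convex) and `t ↦ t^{q₁/q₂}` (concave) turn such a bound into
`∑ wₙ xₙ^{-q₁} ≤ C^{q₂-q₁} ∑ wₙ xₙ^{-q₂}`, and letting the partial sums grow gives the theorem.
-/

theorem one_sub_mul_sub_one_le_rpow_neg {q x : ℝ} (hq : 0 ≤ q) (hx : 0 < x) :
    1 - q * (x - 1) ≤ x ^ (-q) := by
  have bernoulli := one_add_mul_self_le_rpow_one_add (s := x⁻¹ - 1)
    (by linarith [inv_pos.2 hx]) (p := q + 1) (by linarith)
  rw [add_sub_cancel] at bernoulli
  calc 1 - q * (x - 1) = x * (1 + (q + 1) * (x⁻¹ - 1)) := by field_simp; ring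
    _ ≤ x * x⁻¹ ^ (q + 1) := by gcongr
    _ = x ^ (-q) := by
      rw [Real.inv_rpow hx.le, Real.rpow_add_one hx.ne', Real.rpow_neg hx.le]
      field_simp

namespace Finset

variable {ι : Type*} (s : Finset ι) {w x : ι → ℝ}

theorem sum_le_sum_mul_rpow_neg (hw : ∀ i ∈ s, 0 ≤ w i) (hx : ∀ i ∈ s, 0 < x i)
    (hwx : ∑ i ∈ s, w i * x i ≤ ∑ i ∈ s, w i) {q : ℝ} (hq : 0 ≤ q) :
    ∑ i ∈ s, w i ≤ ∑ i ∈ s, w i * x i ^ (-q) :=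
  calc ∑ i ∈ s, w i ≤ ∑ i ∈ s, w i + q * (∑ i ∈ s, w i - ∑ i ∈ s, w i * x i) :=
        le_add_of_nonneg_right (mul_nonneg hq (sub_nonneg.2 hwx))
    _ = ∑ i ∈ s, w i * (1 - q * (x i - 1)) := by
        rw [mul_sub, mul_sum, mul_sum, ← sum_sub_distrib, ← sum_add_distrib]
        exact sum_congr rfl fun i _ ↦ by ring
    _ ≤ ∑ i ∈ s, w i * x i ^ (-q) := sum_le_sum fun i hi ↦
        mul_le_mul_of_nonneg_left (one_sub_mul_sub_one_le_rpow_neg hq (hx i hi)) (hw i hi)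

theorem sum_mul_rpow_neg_le_sum_mul_rpow_neg (hw : ∀ i ∈ s, 0 ≤ w i) (hx : ∀ i ∈ s, 0 < x i)
    (hwx : ∑ i ∈ s, w i * x i ≤ ∑ i ∈ s, w i) {q₁ q₂ : ℝ} (hq₁ : 0 ≤ q₁) (hq₁₂ : q₁ ≤ q₂) :
    ∑ i ∈ s, w i * x i ^ (-q₁) ≤ ∑ i ∈ s, w i * x i ^ (-q₂) := by
  rcases hq₁.eq_or_lt with rfl | hq₁
  · simpa using sum_le_sum_mul_rpow_neg s hw hx hwx hq₁₂
  have hq₂ : 0 < q₂ := hq₁.trans_le hq₁₂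
  set r := q₁ / q₂
  have hr : r ≤ 1 := div_le_one_of_le₀ hq₁₂ hq₂.le
  have concave : ∀ i ∈ s, x i ^ (-q₁) ≤ 1 + r * (x i ^ (-q₂) - 1) := fun i hi ↦ by
    have := rpow_one_add_le_one_add_mul_self (s := x i ^ (-q₂) - 1)
      (by linarith [Real.rpow_pos_of_pos (hx i hi) (-q₂)]) (by positivity) hr
    rwa [add_sub_cancel, ← Real.rpow_mul (hx i hi).le,
      show -q₂ * r = -q₁ by simp only [r]; field_simp] at this
  calc ∑ i ∈ s, w i * x i ^ (-q₁) ≤ ∑ i ∈ s, w i * (1 + r * (x i ^ (-q₂) - 1)) :=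
        sum_le_sum fun i hi ↦ mul_le_mul_of_nonneg_left (concave i hi) (hw i hi)
    _ = (1 - r) * ∑ i ∈ s, w i + r * ∑ i ∈ s, w i * x i ^ (-q₂) := by
        rw [mul_sum, mul_sum, ← sum_add_distrib]
        exact sum_congr rfl fun i _ ↦ by ring
    _ ≤ (1 - r) * ∑ i ∈ s, w i * x i ^ (-q₂) + r * ∑ i ∈ s, w i * x i ^ (-q₂) := by
        have := sum_le_sum_mul_rpow_neg s hw hx hwx hq₂.le
        gcongr
    _ = ∑ i ∈ s, w i * x i ^ (-q₂) := by ring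

theorem sum_mul_rpow_neg_le_rpow_mul_sum_mul_rpow_neg (hw : ∀ i ∈ s, 0 ≤ w i)
    (hx : ∀ i ∈ s, 0 < x i) {C : ℝ} (hC : 0 < C) (hwx : ∑ i ∈ s, w i * x i ≤ C * ∑ i ∈ s, w i)
    {q₁ q₂ : ℝ} (hq₁ : 0 ≤ q₁) (hq₁₂ : q₁ ≤ q₂) :
    ∑ i ∈ s, w i * x i ^ (-q₁) ≤ C ^ (q₂ - q₁) * ∑ i ∈ s, w i * x i ^ (-q₂) := by
  have scale : ∀ q : ℝ, ∑ i ∈ s, w i * (x i / C) ^ (-q) = C ^ q * ∑ i ∈ s, w i * x i ^ (-q) := by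
    intro q
    rw [mul_sum]
    refine sum_congr rfl fun i hi ↦ ?_
    rw [Real.div_rpow (hx i hi).le hC.le, Real.rpow_neg hC.le, div_inv_eq_mul]
    ring
  have hwx' : ∑ i ∈ s, w i * (x i / C) ≤ ∑ i ∈ s, w i := by
    simp_rw [← mul_div_assoc, ← sum_div]
    rwa [div_le_iff₀ hC, mul_comm]
  have key := sum_mul_rpow_neg_le_sum_mul_rpow_neg s hw (fun i hi ↦ div_pos (hx i hi) hC) hwx'
    hq₁ hq₁₂
  rw [scale, scale] at key
  rw [Real.rpow_sub hC, div_mul_eq_mul_div, le_div_iff₀ (Real.rpow_pos_of_pos hC q₁)]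
  linarith

end Finset

theorem ENNReal.tsum_ofReal_le_mul_of_sum_range_le {f g : ℕ → ℝ} {K : ℝ} (hf : ∀ n, 0 ≤ f n)
    (hg : ∀ n, 0 ≤ g n) (h : ∀ N, ∑ n ∈ range N, f n ≤ K * ∑ n ∈ range N, g n) :
    ∑' n, ENNReal.ofReal (f n) ≤ ENNReal.ofReal K * ∑' n, ENNReal.ofReal (g n) := by
  rw [ENNReal.tsum_eq_iSup_nat]
  refine iSup_le fun N ↦ ?_
  calc ∑ n ∈ range N, ENNReal.ofReal (f n) = ENNReal.ofReal (∑ n ∈ range N, f n) :=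
        (ENNReal.ofReal_sum_of_nonneg fun n _ ↦ hf n).symm
    _ ≤ ENNReal.ofReal K * ENNReal.ofReal (∑ n ∈ range N, g n) := by
        rw [← ENNReal.ofReal_mul' (sum_nonneg fun n _ ↦ hg n)]
        exact ENNReal.ofReal_le_ofReal (h N)
    _ ≤ ENNReal.ofReal K * ∑' n, ENNReal.ofReal (g n) := by
        rw [ENNReal.ofReal_sum_of_nonneg fun n _ ↦ hg n]
        gcongr
        exact ENNReal.sum_le_tsum _

theorem copson_step {p Λ l a m m' : ℝ} (hp : 0 ≤ p) (hΛ : 0 ≤ Λ) (hm : 0 < m) (hm' : 0 < m')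
    (h : (Λ + l) * m' = Λ * m + l * a) :
    (Λ + l) * m' ^ (-p) + p * (l * m' ^ (-p) * (a / m'))
      ≤ Λ * m ^ (-p) + (p + 1) * (l * m' ^ (-p)) := by
  have tangent : m' ^ (-p) * (1 - p * (m / m' - 1)) ≤ m ^ (-p) := by
    have := one_sub_mul_sub_one_le_rpow_neg hp (div_pos hm hm')
    rwa [Real.div_rpow hm.le hm'.le, le_div_iff₀ (Real.rpow_pos_of_pos hm' _), mul_comm] at this
  have hrel : Λ * (m / m' - 1) = l * (1 - a / m') := by
    field_simp
    linarith
  linear_combination mul_le_mul_of_nonneg_left tangent hΛ + p * m' ^ (-p) * hrel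

noncomputable def prefixMean (l a : ℕ → ℝ) (n : ℕ) : ℝ :=
  (∑ i ∈ range (n + 1), l i * a i) / ∑ i ∈ range (n + 1), l i

section Copson

variable {l a : ℕ → ℝ}

theorem prefixMean_pos (ha : ∀ n, 0 < a n) (hl : ∀ n, 0 < l n) (n : ℕ) :
    0 < prefixMean l a n :=
  div_pos (sum_pos (fun i _ ↦ mul_pos (hl i) (ha i)) nonempty_range_add_one)
    (sum_pos (fun i _ ↦ hl i) nonempty_range_add_one)

theorem prefixMean_zero (hl : l 0 ≠ 0) : prefixMean l a 0 = a 0 := by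
  simp [prefixMean, hl]

theorem sum_range_mul_prefixMean {n : ℕ} (hl : ∑ i ∈ range (n + 1), l i ≠ 0) :
    (∑ i ∈ range (n + 1), l i) * prefixMean l a n = ∑ i ∈ range (n + 1), l i * a i :=
  mul_div_cancel₀ _ hl

theorem copson_telescoping {p : ℝ} (hp : 0 ≤ p) (ha : ∀ n, 0 < a n) (hl : ∀ n, 0 < l n)
    (N : ℕ) :
    p * ∑ n ∈ range (N + 1), l n * prefixMean l a n ^ (-p) * (a n / prefixMean l a n)
        + (∑ i ∈ range (N + 1), l i) * prefixMean l a N ^ (-p)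
      ≤ (p + 1) * ∑ n ∈ range (N + 1), l n * prefixMean l a n ^ (-p) := by
  have hΛ : ∀ n, 0 < ∑ i ∈ range (n + 1), l i := fun n ↦
    sum_pos (fun i _ ↦ hl i) nonempty_range_add_one
  induction N with
  | zero =>
    simp only [zero_add, sum_range_one, prefixMean_zero (hl 0).ne', div_self (ha 0).ne']
    linarith
  | succ N ih =>
    have hrec : (∑ i ∈ range (N + 1), l i + l (N + 1)) * prefixMean l a (N + 1)
        = (∑ i ∈ range (N + 1), l i) * prefixMean l a N + l (N + 1) * a (N + 1) := by
      rw [← sum_range_succ, sum_range_mul_prefixMean (hΛ _).ne',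
        sum_range_mul_prefixMean (hΛ _).ne', sum_range_succ]
    have step := copson_step hp (hΛ N).le (prefixMean_pos ha hl N)
      (prefixMean_pos ha hl (N + 1)) hrec
    simp only [sum_range_succ _ (N + 1)]
    linarith

theorem copson_sum_range_le {p : ℝ} (hp : 0 < p) (ha : ∀ n, 0 < a n) (hl : ∀ n, 0 < l n)
    (N : ℕ) :
    ∑ n ∈ range N, l n * prefixMean l a n ^ (-p) * (a n / prefixMean l a n)
      ≤ (p + 1) / p * ∑ n ∈ range N, l n * prefixMean l a n ^ (-p) := by
  cases N with
  | zero => simp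
  | succ N =>
    have telescoped := copson_telescoping hp.le ha hl N
    have tail_nonneg : 0 ≤ (∑ i ∈ range (N + 1), l i) * prefixMean l a N ^ (-p) :=
      mul_nonneg (sum_nonneg fun i _ ↦ (hl i).le) (Real.rpow_nonneg (prefixMean_pos ha hl N).le _)
    rw [div_mul_eq_mul_div, le_div_iff₀ hp]
    linarith

end Copson

/-- **Theorem 4.** For `0 < q₁ ≤ q₂ ≤ p` and positive sequences `(aₙ)`, `(λₙ)`,
with `Λₙ = λ₁ + ⋯ + λₙ` and `Aₙ = λ₁a₁ + ⋯ + λₙaₙ`,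
`∑ λₙ (Aₙ/Λₙ)^{-p+q₁} aₙ^{-q₁} ≤ ((p+1)/p)^{q₂-q₁} ∑ λₙ (Aₙ/Λₙ)^{-p+q₂} aₙ^{-q₂}`,
both sides taken in `[0,∞]`. -/
theorem copson_negative_exponent_two_exponents (p q₁ q₂ : ℝ)
    (hq₁ : 0 < q₁) (hq₁₂ : q₁ ≤ q₂) (hq₂p : q₂ ≤ p)
    (a l : ℕ → ℝ) (ha : ∀ n, 0 < a n) (hl : ∀ n, 0 < l n) :
    (∑' n : ℕ, ENNReal.ofReal (l n *
        ((∑ i ∈ Finset.range (n + 1), l i * a i) / (∑ i ∈ Finset.range (n + 1), l i)) ^ (-p + q₁)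
          * (a n) ^ (-q₁)))
      ≤ ENNReal.ofReal (((p + 1) / p) ^ (q₂ - q₁)) *
        ∑' n : ℕ, ENNReal.ofReal (l n *
          ((∑ i ∈ Finset.range (n + 1), l i * a i) / (∑ i ∈ Finset.range (n + 1), l i)) ^ (-p + q₂)
            * (a n) ^ (-q₂)) := by
  change ∑' n, ENNReal.ofReal (l n * prefixMean l a n ^ (-p + q₁) * a n ^ (-q₁))
    ≤ ENNReal.ofReal (((p + 1) / p) ^ (q₂ - q₁))
      * ∑' n, ENNReal.ofReal (l n * prefixMean l a n ^ (-p + q₂) * a n ^ (-q₂))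
  have hp : 0 < p := by linarith
  have hm := prefixMean_pos ha hl
  have hw : ∀ n, 0 ≤ l n * prefixMean l a n ^ (-p) := fun n ↦
    mul_nonneg (hl n).le (Real.rpow_nonneg (hm n).le _)
  have term : ∀ q n, l n * prefixMean l a n ^ (-p + q) * a n ^ (-q)
      = l n * prefixMean l a n ^ (-p) * (a n / prefixMean l a n) ^ (-q) := fun q n ↦ by
    rw [Real.rpow_add (hm n), Real.div_rpow (ha n).le (hm n).le, Real.rpow_neg (hm n).le q]
    field_simp
  have term_nonneg : ∀ q n, 0 ≤ l n * prefixMean l a n ^ (-p + q) * a n ^ (-q) := fun q n ↦ by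
    rw [term]
    exact mul_nonneg (hw n) (Real.rpow_nonneg (div_pos (ha n) (hm n)).le _)
  refine ENNReal.tsum_ofReal_le_mul_of_sum_range_le (term_nonneg q₁) (term_nonneg q₂) fun N ↦ ?_
  simp only [term]
  exact sum_mul_rpow_neg_le_rpow_mul_sum_mul_rpow_neg (range N) (fun n _ ↦ hw n)
    (fun n _ ↦ div_pos (ha n) (hm n)) (by positivity) (copson_sum_range_le hp ha hl N) hq₁.le hq₁₂
end

section
/- Let p ≥ q > 0 and let (a_n)_{n≥1} be a sequence of positive real numbers. Then ∑_{n=1}^∞ ((1/n) ∑_{k=1}^n a_k)^{-p} ≤ ((p+1)/p)^q · ∑_{n=1}^∞ ((1/n) ∑_{k=1}^n a_k)^{-p+q} a_n^{-q}, where both sides are allowed to be infinite. -/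
/-!
Write `Aₙ` for the mean of `a₀, …, aₙ` and `Gₙ = n · (mean of the first n terms)^(-p)`, so that
`G₀ = 0` and `Gₙ ≥ 0`. Convexity of `z ↦ z^(p+1)` (Bernoulli's inequality) gives
`G_{n+1} - Gₙ ≤ Aₙ^(-p) (p + 1 - p aₙ / Aₙ)`, and `T^q ≥ 1 + q (1 - T⁻¹)` at
`T = (p+1) Aₙ / (p aₙ)` turns this into
`Aₙ^(-p) + q/(p+1) (G_{n+1} - Gₙ) ≤ ((p+1)/p)^q Aₙ^(-p+q) aₙ^(-q)`.
Summing, the `G`-terms telescope to `q/(p+1) G_M ≥ 0`.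
-/

open Finset

lemma sub_le_rpow_mul_rpow_neg {p t y : ℝ} (hp : 0 ≤ p) (ht : 0 ≤ t) (hy : 0 < y) :
    (p + 1) * t - p * y ≤ t ^ (p + 1) * y ^ (-p) := by
  have hbern := one_add_mul_self_le_rpow_one_add (s := t / y - 1)
    (by linarith [div_nonneg ht hy.le]) (p := p + 1) (by linarith)
  rw [add_sub_cancel] at hbern
  have hscale : y * (t / y) ^ (p + 1) = t ^ (p + 1) * y ^ (-p) := by
    rw [Real.div_rpow ht hy.le, Real.rpow_add hy, Real.rpow_one, Real.rpow_neg hy.le]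
    field_simp
  rw [← hscale]
  calc (p + 1) * t - p * y = y * (1 + (p + 1) * (t / y - 1)) := by field_simp; ring
    _ ≤ _ := mul_le_mul_of_nonneg_left hbern hy.le

lemma one_add_mul_one_sub_inv_le_rpow {q T : ℝ} (hq : 0 ≤ q) (hT : 0 < T) :
    1 + q * (1 - T⁻¹) ≤ T ^ q := by
  calc 1 + q * (1 - T⁻¹) ≤ q * Real.log T + 1 := by
        nlinarith [Real.one_sub_inv_le_log_of_pos hT]
    _ ≤ T ^ q := by
        rw [Real.rpow_def_of_pos hT, mul_comm]
        exact Real.add_one_le_exp _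

lemma rpow_neg_add_le_rpow_mul_rpow {p q A b : ℝ} (hp : 0 < p) (hq : 0 ≤ q) (hA : 0 < A)
    (hb : 0 < b) :
    A ^ (-p) + q / (p + 1) * (A ^ (-p) * (p + 1 - p * b / A))
      ≤ ((p + 1) / p) ^ q * (A ^ (-p + q) * b ^ (-q)) := by
  set T := (p + 1) / p * A / b
  have hT : 0 < T := by positivity
  have hlhs : A ^ (-p) + q / (p + 1) * (A ^ (-p) * (p + 1 - p * b / A))
      = A ^ (-p) * (1 + q * (1 - T⁻¹)) := by
    simp only [T]; field_simp
  have hrhs : ((p + 1) / p) ^ q * (A ^ (-p + q) * b ^ (-q)) = A ^ (-p) * T ^ q := by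
    simp only [T]
    rw [Real.div_rpow (by positivity) hb.le, Real.mul_rpow (by positivity) hA.le,
      Real.rpow_add hA, Real.rpow_neg hb.le]
    field_simp
  rw [hlhs, hrhs]
  exact mul_le_mul_of_nonneg_left (one_add_mul_one_sub_inv_le_rpow hq hT) (by positivity)

noncomputable section Sequence

variable (p : ℝ) (a : ℕ → ℝ)

def runningMean (n : ℕ) : ℝ := ((n : ℝ) + 1)⁻¹ * ∑ k ∈ range (n + 1), a k

/-- The `Gₙ` above; this form makes `G₀ = 0`. -/
def hardyPotential (n : ℕ) : ℝ := (n : ℝ) ^ (p + 1) * (∑ k ∈ range n, a k) ^ (-p)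

variable {p a} {q : ℝ}

lemma runningMean_pos (ha : ∀ n, 0 < a n) (n : ℕ) : 0 < runningMean a n := by
  unfold runningMean
  have := sum_pos (fun k _ => ha k) (nonempty_range_add_one (n := n))
  positivity

lemma hardyPotential_zero (hp : p + 1 ≠ 0) : hardyPotential p a 0 = 0 := by
  simp [hardyPotential, Real.zero_rpow hp]

lemma hardyPotential_nonneg (ha : ∀ n, 0 ≤ a n) (n : ℕ) : 0 ≤ hardyPotential p a n := by
  unfold hardyPotential
  have := sum_nonneg fun k (_ : k ∈ range n) => ha k
  positivity

lemma hardyPotential_succ {n : ℕ} (hA : 0 ≤ runningMean a n) :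
    hardyPotential p a (n + 1) = ((n : ℝ) + 1) * runningMean a n ^ (-p) := by
  have hn : (0 : ℝ) < n + 1 := by positivity
  have hsum : ∑ k ∈ range (n + 1), a k = ((n : ℝ) + 1) * runningMean a n := by
    rw [runningMean, mul_inv_cancel_left₀ hn.ne']
  rw [hardyPotential, hsum, Real.mul_rpow hn.le hA, Nat.cast_succ, ← mul_assoc,
    ← Real.rpow_add hn, add_neg_cancel_comm, Real.rpow_one]

lemma hardyPotential_succ_sub_le (hp : 0 < p) (ha : ∀ n, 0 < a n) (n : ℕ) :
    hardyPotential p a (n + 1) - hardyPotential p a n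
      ≤ runningMean a n ^ (-p) * (p + 1 - p * a n / runningMean a n) := by
  have hA : 0 < runningMean a n := runningMean_pos ha n
  rw [hardyPotential_succ hA.le]
  set A := runningMean a n
  rcases n.eq_zero_or_pos with rfl | hn
  · have : A = a 0 := by simp [A, runningMean]
    simp [hardyPotential_zero (by linarith : p + 1 ≠ 0), this,
      mul_div_cancel_right₀ _ (ha 0).ne']
  set y := (∑ k ∈ range n, a k) / A
  have hy : 0 < y := div_pos (sum_pos (fun k _ => ha k) (nonempty_range_iff.2 hn.ne')) hA
  have hy_eq : y = n + 1 - a n / A := by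
    have hsum : ∑ k ∈ range n, a k = (n + 1) * A - a n := by
      rw [eq_sub_iff_add_eq, ← sum_range_succ]
      simp only [A, runningMean]
      field_simp
    simp only [y, hsum]
    field_simp
  have htangent : A ^ (-p) * ((p + 1) * n - p * y) ≤ hardyPotential p a n := by
    have hG : hardyPotential p a n = A ^ (-p) * ((n : ℝ) ^ (p + 1) * y ^ (-p)) := by
      rw [hardyPotential, ← div_mul_cancel₀ (∑ k ∈ range n, a k) hA.ne',
        Real.mul_rpow hy.le hA.le]
      ring
    rw [hG]
    exact mul_le_mul_of_nonneg_left (sub_le_rpow_mul_rpow_neg hp.le (Nat.cast_nonneg n) hy)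
      (by positivity)
  have hsplit : A ^ (-p) * (p + 1 - p * a n / A)
      = (n + 1) * A ^ (-p) - A ^ (-p) * ((p + 1) * n - p * (n + 1 - a n / A)) := by ring
  rw [hy_eq] at htangent
  linarith

lemma runningMean_rpow_neg_add_le (hp : 0 < p) (hq : 0 ≤ q) (ha : ∀ n, 0 < a n) (n : ℕ) :
    runningMean a n ^ (-p)
        + q / (p + 1) * (hardyPotential p a (n + 1) - hardyPotential p a n)
      ≤ ((p + 1) / p) ^ q * (runningMean a n ^ (-p + q) * a n ^ (-q)) := by
  have hstep := mul_le_mul_of_nonneg_left (hardyPotential_succ_sub_le hp ha n)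
    (by positivity : 0 ≤ q / (p + 1))
  linarith [rpow_neg_add_le_rpow_mul_rpow hp hq (runningMean_pos ha n) (ha n)]

lemma sum_range_runningMean_rpow_neg_le (hp : 0 < p) (hq : 0 ≤ q) (ha : ∀ n, 0 < a n)
    (M : ℕ) :
    ∑ n ∈ range M, runningMean a n ^ (-p)
      ≤ ((p + 1) / p) ^ q * ∑ n ∈ range M, runningMean a n ^ (-p + q) * a n ^ (-q) := by
  have hGM : 0 ≤ q / (p + 1) * hardyPotential p a M :=
    mul_nonneg (by positivity) (hardyPotential_nonneg (fun n => (ha n).le) M)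
  calc ∑ n ∈ range M, runningMean a n ^ (-p)
      ≤ ∑ n ∈ range M, runningMean a n ^ (-p) + q / (p + 1) * hardyPotential p a M := by
        linarith
    _ = ∑ n ∈ range M, (runningMean a n ^ (-p)
          + q / (p + 1) * (hardyPotential p a (n + 1) - hardyPotential p a n)) := by
        rw [sum_add_distrib, ← mul_sum, sum_range_sub, hardyPotential_zero (by linarith),
          sub_zero]
    _ ≤ ∑ n ∈ range M, ((p + 1) / p) ^ q * (runningMean a n ^ (-p + q) * a n ^ (-q)) :=
        sum_le_sum fun n _ => runningMean_rpow_neg_add_le hp hq ha n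
    _ = _ := (mul_sum _ _ _).symm

end Sequence

lemma tsum_ofReal_le_ofReal_mul_tsum_ofReal_of_sum_range_le {f g : ℕ → ℝ} {c : ℝ}
    (hf : ∀ n, 0 ≤ f n) (hg : ∀ n, 0 ≤ g n) (hc : 0 ≤ c)
    (h : ∀ M, ∑ n ∈ range M, f n ≤ c * ∑ n ∈ range M, g n) :
    ∑' n, ENNReal.ofReal (f n) ≤ ENNReal.ofReal c * ∑' n, ENNReal.ofReal (g n) := by
  refine ENNReal.tsum_le_of_sum_range_le fun M => ?_
  calc ∑ n ∈ range M, ENNReal.ofReal (f n)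
      = ENNReal.ofReal (∑ n ∈ range M, f n) :=
        (ENNReal.ofReal_sum_of_nonneg fun n _ => hf n).symm
    _ ≤ ENNReal.ofReal c * ENNReal.ofReal (∑ n ∈ range M, g n) := by
        rw [← ENNReal.ofReal_mul hc]
        exact ENNReal.ofReal_le_ofReal (h M)
    _ ≤ ENNReal.ofReal c * ∑' n, ENNReal.ofReal (g n) := by
        rw [ENNReal.ofReal_sum_of_nonneg fun n _ => hg n]
        gcongr
        exact ENNReal.sum_le_tsum _

/-- **Corollary 2.1.** For `p ≥ q > 0` and a positive sequence `(aₙ)`,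
`∑ₙ ((1/n) ∑_{k=1}^n a_k)^{-p} ≤ ((p+1)/p)^q ∑ₙ ((1/n) ∑_{k=1}^n a_k)^{-p+q} aₙ^{-q}`,
both sides taken in `[0,∞]`. -/
theorem hardy_negative_exponent_series (p q : ℝ) (hq : 0 < q) (hpq : q ≤ p)
    (a : ℕ → ℝ) (ha : ∀ n, 0 < a n) :
    (∑' n : ℕ, ENNReal.ofReal
        ((((n : ℝ) + 1)⁻¹ * ∑ k ∈ Finset.range (n + 1), a k) ^ (-p)))
      ≤ ENNReal.ofReal (((p + 1) / p) ^ q) *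
        ∑' n : ℕ, ENNReal.ofReal
          ((((n : ℝ) + 1)⁻¹ * ∑ k ∈ Finset.range (n + 1), a k) ^ (-p + q) * (a n) ^ (-q)) := by
  have hp : 0 < p := hq.trans_le hpq
  have hA n : 0 ≤ runningMean a n := (runningMean_pos ha n).le
  exact tsum_ofReal_le_ofReal_mul_tsum_ofReal_of_sum_range_le
    (fun n => Real.rpow_nonneg (hA n) _)
    (fun n => mul_nonneg (Real.rpow_nonneg (hA n) _) (Real.rpow_nonneg (ha n).le _))
    (by positivity) (sum_range_runningMean_rpow_neg_le hp hq.le ha)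
end

section
/- Let p > 0, let N be a positive integer, and let a_1,…,a_N and λ_1,…,λ_N be positive real numbers. Set Λ_n = λ_1 + ⋯ + λ_n and A_n = λ_1 a_1 + ⋯ + λ_n a_n. Then ∑_{n=1}^N λ_n a_n (A_n/Λ_n)^{-p-1} ≤ ((p+1)/p) · ∑_{n=1}^N λ_n (A_n/Λ_n)^{-p}. -/
/-! Write `Gₙ = Aₙ / Λₙ`, so that `λₙ aₙ = Λₙ Gₙ - Λₙ₋₁ Gₙ₋₁`. Substituting this and using the
tangent line of the convex function `t ↦ t ^ (-p)` at `Gₙ`, evaluated at `Gₙ₋₁`, gives termwise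
`p λₙ aₙ Gₙ^(-p-1) + Λₙ Gₙ^(-p) ≤ (p + 1) λₙ Gₙ^(-p) + Λₙ₋₁ Gₙ₋₁^(-p)`.
Summing, the terms `Λₙ Gₙ^(-p)` telescope and the nonnegative boundary term `Λ_N G_N^(-p)` is
dropped. -/

open Finset

namespace Real

theorem add_one_le_rpow_neg_add_mul {p t : ℝ} (hp : 0 ≤ p) (ht : 0 < t) :
    p + 1 ≤ t ^ (-p) + p * t := by
  have hp1 : 0 < p + 1 := by linarith
  have amgm := geom_mean_le_arith_mean2_weighted (w₁ := 1 / (p + 1)) (w₂ := p / (p + 1))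
    (by positivity) (by positivity) (rpow_nonneg ht.le (-p)) ht.le (by field_simp; ring)
  have geom : (t ^ (-p)) ^ (1 / (p + 1)) * t ^ (p / (p + 1)) = 1 := by
    rw [← rpow_mul ht.le, ← rpow_add ht]
    convert rpow_zero t using 2
    ring
  rw [geom] at amgm
  calc p + 1 = (p + 1) * 1 := (mul_one _).symm
    _ ≤ (p + 1) * (1 / (p + 1) * t ^ (-p) + p / (p + 1) * t) := by gcongr
    _ = t ^ (-p) + p * t := by field_simp

/-- The tangent line of `t ↦ t ^ (-p)` at `y` lies below the graph at `x`. -/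
theorem add_one_mul_rpow_neg_le {p x y : ℝ} (hp : 0 ≤ p) (hx : 0 < x) (hy : 0 < y) :
    (p + 1) * y ^ (-p) ≤ x ^ (-p) + p * x * y ^ (-p - 1) := by
  have h := mul_le_mul_of_nonneg_left (add_one_le_rpow_neg_add_mul hp (div_pos hx hy))
    (rpow_nonneg hy.le (-p))
  have e1 : y ^ (-p) * (x / y) ^ (-p) = x ^ (-p) := by
    rw [div_rpow hx.le hy.le]
    exact mul_div_cancel₀ _ (rpow_pos_of_pos hy _).ne'
  have e2 : y ^ (-p) * (x / y) = x * y ^ (-p - 1) := by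
    rw [rpow_sub hy, rpow_one]; ring
  calc (p + 1) * y ^ (-p) = y ^ (-p) * (p + 1) := mul_comm _ _
    _ ≤ y ^ (-p) * ((x / y) ^ (-p) + p * (x / y)) := h
    _ = x ^ (-p) + p * x * y ^ (-p - 1) := by rw [mul_add, e1, mul_left_comm, e2, mul_assoc]

end Real

open Real

namespace Copson

theorem step_le {p c lam a x y : ℝ} (hp : 0 ≤ p) (hc : 0 ≤ c) (hx : 0 < x) (hy : 0 < y)
    (hmean : (c + lam) * y = c * x + lam * a) :
    p * (lam * a) * y ^ (-p - 1) + (c + lam) * y ^ (-p)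
      ≤ (p + 1) * lam * y ^ (-p) + c * x ^ (-p) := by
  have tangent := mul_le_mul_of_nonneg_left (add_one_mul_rpow_neg_le hp hx hy) hc
  have hpow : y * y ^ (-p - 1) = y ^ (-p) := by
    rw [rpow_sub hy, rpow_one, mul_div_cancel₀ _ hy.ne']
  rw [show lam * a = (c + lam) * y - c * x by linarith]
  linear_combination tangent + p * (c + lam) * hpow

variable (l a : ℕ → ℝ)

noncomputable def weightSum (n : ℕ) : ℝ := ∑ i ∈ range (n + 1), l i

noncomputable def weightedMean (n : ℕ) : ℝ :=
  (∑ i ∈ range (n + 1), l i * a i) / weightSum l n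

variable {l a}

theorem weightSum_pos {N : ℕ} (hl : ∀ n ≤ N, 0 < l n) : 0 < weightSum l N :=
  sum_pos (fun i hi => hl i (Nat.lt_succ_iff.mp (mem_range.mp hi))) nonempty_range_add_one

theorem weightedMean_pos {N : ℕ} (ha : ∀ n ≤ N, 0 < a n) (hl : ∀ n ≤ N, 0 < l n) :
    0 < weightedMean l a N := by
  have hsum : 0 < ∑ i ∈ range (N + 1), l i * a i := by
    refine sum_pos (fun i hi => ?_) nonempty_range_add_one
    have hiN := Nat.lt_succ_iff.mp (mem_range.mp hi)
    exact mul_pos (hl i hiN) (ha i hiN)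
  exact div_pos hsum (weightSum_pos hl)

theorem weightSum_succ (n : ℕ) : weightSum l (n + 1) = weightSum l n + l (n + 1) :=
  sum_range_succ _ _

theorem weightSum_mul_weightedMean {n : ℕ} (hl : weightSum l n ≠ 0) :
    weightSum l n * weightedMean l a n = ∑ i ∈ range (n + 1), l i * a i :=
  mul_div_cancel₀ _ hl

theorem mul_sum_add_weightSum_le {p : ℝ} (hp : 0 ≤ p) (N : ℕ) (ha : ∀ n ≤ N, 0 < a n)
    (hl : ∀ n ≤ N, 0 < l n) :
    p * ∑ n ∈ range (N + 1), l n * a n * weightedMean l a n ^ (-p - 1)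
        + weightSum l N * weightedMean l a N ^ (-p)
      ≤ (p + 1) * ∑ n ∈ range (N + 1), l n * weightedMean l a n ^ (-p) := by
  induction N with
  | zero =>
    -- the step from the empty prefix (`c = 0`, with an arbitrary `x`)
    have hmean : (0 + l 0) * weightedMean l a 0 = 0 * 1 + l 0 * a 0 := by
      simpa [weightSum] using weightSum_mul_weightedMean (a := a) (weightSum_pos hl).ne'
    have step := step_le hp le_rfl one_pos (weightedMean_pos ha hl) hmean
    simp only [weightSum, zero_add, sum_range_one] at step ⊢
    linarith
  | succ N ih =>
    have ha' : ∀ n ≤ N, 0 < a n := fun n hn => ha n (Nat.le_succ_of_le hn)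
    have hl' : ∀ n ≤ N, 0 < l n := fun n hn => hl n (Nat.le_succ_of_le hn)
    have hmean : (weightSum l N + l (N + 1)) * weightedMean l a (N + 1)
        = weightSum l N * weightedMean l a N + l (N + 1) * a (N + 1) := by
      rw [← weightSum_succ, weightSum_mul_weightedMean (weightSum_pos hl).ne',
        weightSum_mul_weightedMean (weightSum_pos hl').ne', sum_range_succ _ (N + 1)]
    have step := step_le hp (weightSum_pos hl').le (weightedMean_pos ha' hl')
      (weightedMean_pos ha hl) hmean
    rw [sum_range_succ _ (N + 1), sum_range_succ _ (N + 1), weightSum_succ]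
    linarith [ih ha' hl']

end Copson

/-- **Lemma 2.1.** For `p > 0`, `N ≥ 1` and positive reals `a₁,…,a_N`, `λ₁,…,λ_N`,
with `Λₙ = λ₁ + ⋯ + λₙ` and `Aₙ = λ₁a₁ + ⋯ + λₙaₙ`,
`∑_{n=1}^N λₙ aₙ (Aₙ/Λₙ)^{-p-1} ≤ ((p+1)/p) ∑_{n=1}^N λₙ (Aₙ/Λₙ)^{-p}`. -/
theorem copson_lemma (p : ℝ) (hp : 0 < p) (N : ℕ) (hN : 0 < N)
    (a l : ℕ → ℝ) (ha : ∀ n < N, 0 < a n) (hl : ∀ n < N, 0 < l n) :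
    (∑ n ∈ Finset.range N, l n * a n *
        ((∑ i ∈ Finset.range (n + 1), l i * a i) / (∑ i ∈ Finset.range (n + 1), l i)) ^ (-p - 1))
      ≤ ((p + 1) / p) *
        ∑ n ∈ Finset.range N, l n *
          ((∑ i ∈ Finset.range (n + 1), l i * a i) / (∑ i ∈ Finset.range (n + 1), l i)) ^ (-p) := by
  obtain ⟨M, rfl⟩ := Nat.exists_eq_add_one_of_ne_zero hN.ne'
  have ha' : ∀ n ≤ M, 0 < a n := fun n hn => ha n (Nat.lt_succ_of_le hn)
  have hl' : ∀ n ≤ M, 0 < l n := fun n hn => hl n (Nat.lt_succ_of_le hn)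
  have boundary_nonneg : 0 ≤ Copson.weightSum l M * Copson.weightedMean l a M ^ (-p) :=
    mul_nonneg (Copson.weightSum_pos hl').le (rpow_nonneg (Copson.weightedMean_pos ha' hl').le _)
  rw [div_mul_eq_mul_div, le_div_iff₀ hp, mul_comm]
  exact le_of_add_le_of_nonneg_left (Copson.mul_sum_add_weightSum_le hp.le M ha' hl')
    boundary_nonneg
end

section
/- Let p > 0, let N be a positive integer, and let a_1,…,a_N and λ_1,…,λ_N be positive real numbers. Set Λ_n = λ_1 + ⋯ + λ_n and A_n = λ_1 a_1 + ⋯ + λ_n a_n. Then ∑_{n=1}^N λ_n (A_n/Λ_n)^{-p} − (p/(p+1)) ∑_{n=1}^N λ_n a_n (A_n/Λ_n)^{-p-1} ≥ (Λ_N/(p+1)) · (A_N/Λ_N)^{-p}. -/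
open Finset

/-!
The potential `Φₙ = Λₙ/(p+1) · (Aₙ/Λₙ)^(-p)` (with `Φ₀ = 0`) grows at step `n` by at most the
`n`-th summand on the left. Indeed, with `x = Aₙ₋₁/Λₙ₋₁` and `y = Aₙ/Λₙ`, the difference is
`Λₙ₋₁/(p+1)` times the gap between `t ↦ t^(-p)` at `x` and its tangent line at `y`, which is
nonnegative by convexity. Summing, the left side dominates the telescoped sum `Φ_N`.
-/

theorem tangent_line_le_rpow_neg {p x y : ℝ} (hp : 0 < p) (hx : 0 < x) (hy : 0 < y) :
    (p + 1) * y ^ (-p) - p * (x * y ^ (-p - 1)) ≤ x ^ (-p) := by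
  have hp1 : 0 < p + 1 := by linarith
  -- weighted AM-GM with weights `1/(p+1)`, `p/(p+1)`: the geometric mean of the two terms is `y^(-p)`
  have hw : 1 / (p + 1) + p / (p + 1) = 1 := by field_simp; ring
  have amgm := Real.geom_mean_le_arith_mean2_weighted (by positivity) (by positivity)
    (Real.rpow_pos_of_pos hx (-p)).le (mul_pos hx (Real.rpow_pos_of_pos hy (-p - 1))).le hw
  have geom : (x ^ (-p)) ^ (1 / (p + 1)) * (x * y ^ (-p - 1)) ^ (p / (p + 1)) = y ^ (-p) := by
    rw [Real.mul_rpow hx.le (Real.rpow_nonneg hy.le _), ← Real.rpow_mul hx.le,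
      ← Real.rpow_mul hy.le, ← mul_assoc, ← Real.rpow_add hx,
      show -p * (1 / (p + 1)) + p / (p + 1) = 0 by ring, Real.rpow_zero, one_mul,
      show (-p - 1) * (p / (p + 1)) = -p by field_simp; ring]
  rw [geom] at amgm
  have := mul_le_mul_of_nonneg_left amgm hp1.le
  field_simp at this
  linarith

theorem exists_pos_sum_mul_eq_sum_mul {ι : Type*} {s : Finset ι} {w f : ι → ℝ}
    (hw : ∀ i ∈ s, 0 < w i) (hf : ∀ i ∈ s, 0 < f i) :
    ∃ x > 0, ∑ i ∈ s, w i * f i = (∑ i ∈ s, w i) * x := by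
  rcases s.eq_empty_or_nonempty with rfl | hs
  · exact ⟨1, one_pos, by simp⟩
  · have hW : 0 < ∑ i ∈ s, w i := sum_pos hw hs
    refine ⟨(∑ i ∈ s, w i * f i) / ∑ i ∈ s, w i,
      div_pos (sum_pos (fun i hi => mul_pos (hw i hi) (hf i hi)) hs) hW, ?_⟩
    field_simp

/-- `A = L * x` rather than `x = A / L`, so that the first step `L = A = 0` is covered too. -/
theorem copson_potential_step {p L A x l a : ℝ} (hp : 0 < p) (hL : 0 ≤ L) (hx : 0 < x)
    (hA : A = L * x) (hl : 0 < l) (ha : 0 < a) :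
    (L + l) / (p + 1) * ((A + l * a) / (L + l)) ^ (-p) - L / (p + 1) * (A / L) ^ (-p)
      ≤ l * ((A + l * a) / (L + l)) ^ (-p)
        - p / (p + 1) * (l * a * ((A + l * a) / (L + l)) ^ (-p - 1)) := by
  set y := (A + l * a) / (L + l)
  have hy : 0 < y := div_pos (by rw [hA]; positivity) (by positivity)
  have hLx : L * (A / L) ^ (-p) = L * x ^ (-p) := by
    rcases hL.eq_or_lt with rfl | hL
    · simp
    · rw [hA, mul_div_cancel_left₀ x hL.ne']
  have hla : l * a = (L + l) * y - L * x := by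
    simp only [y]; rw [hA]; field_simp; ring
  have hyy : y * y ^ (-p - 1) = y ^ (-p) := by
    rw [← Real.rpow_one_add' hy.le (by linarith)]; ring_nf
  have tangent := tangent_line_le_rpow_neg hp hx hy
  rw [div_mul_eq_mul_div L, hLx, hla, ← sub_nonneg]
  have gap : l * y ^ (-p) - p / (p + 1) * (((L + l) * y - L * x) * y ^ (-p - 1))
      - ((L + l) / (p + 1) * y ^ (-p) - L * x ^ (-p) / (p + 1))
      = L * (x ^ (-p) - ((p + 1) * y ^ (-p) - p * (x * y ^ (-p - 1)))) / (p + 1) := by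
    field_simp
    linear_combination (-(p * (L + l))) * hyy
  rw [gap]
  exact div_nonneg (mul_nonneg hL (sub_nonneg.mpr tangent)) (by linarith)

theorem copson_lemma_strong_general (p : ℝ) (hp : 0 < p) (N : ℕ)
    (a l : ℕ → ℝ) (ha : ∀ n < N, 0 < a n) (hl : ∀ n < N, 0 < l n) :
    (∑ n ∈ Finset.range N, l n *
        ((∑ i ∈ Finset.range (n + 1), l i * a i) / (∑ i ∈ Finset.range (n + 1), l i)) ^ (-p))
      - (p / (p + 1)) *
        ∑ n ∈ Finset.range N, l n * a n *
          ((∑ i ∈ Finset.range (n + 1), l i * a i) / (∑ i ∈ Finset.range (n + 1), l i)) ^ (-p - 1)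
      ≥ ((∑ i ∈ Finset.range N, l i) / (p + 1)) *
          ((∑ i ∈ Finset.range N, l i * a i) / (∑ i ∈ Finset.range N, l i)) ^ (-p) := by
  set potential : ℕ → ℝ := fun n => (∑ i ∈ range n, l i) / (p + 1) *
    ((∑ i ∈ range n, l i * a i) / ∑ i ∈ range n, l i) ^ (-p)
  have telescope : potential N = ∑ n ∈ range N, (potential (n + 1) - potential n) := by
    rw [sum_range_sub]
    simp [potential]
  rw [ge_iff_le, mul_sum, ← sum_sub_distrib]
  change potential N ≤ _
  rw [telescope]
  refine sum_le_sum fun n hn => ?_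
  have hn := mem_range.mp hn
  have hl_lt : ∀ i ∈ range n, 0 < l i := fun i hi => hl i ((mem_range.mp hi).trans hn)
  obtain ⟨x, hx, hA⟩ := exists_pos_sum_mul_eq_sum_mul hl_lt
    (fun i hi => ha i ((mem_range.mp hi).trans hn))
  simpa only [potential, sum_range_succ] using copson_potential_step hp
    (sum_nonneg fun i hi => (hl_lt i hi).le) hx hA (hl n hn) (ha n hn)

/-- **Inequality (2.8).** For `p > 0`, `N ≥ 1` and positive reals `a₁,…,a_N`, `λ₁,…,λ_N`,
with `Λₙ = λ₁ + ⋯ + λₙ` and `Aₙ = λ₁a₁ + ⋯ + λₙaₙ`,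
`∑ λₙ (Aₙ/Λₙ)^{-p} − (p/(p+1)) ∑ λₙ aₙ (Aₙ/Λₙ)^{-p-1} ≥ (Λ_N/(p+1)) (A_N/Λ_N)^{-p}`. -/
theorem copson_lemma_strong (p : ℝ) (hp : 0 < p) (N : ℕ) (hN : 0 < N)
    (a l : ℕ → ℝ) (ha : ∀ n < N, 0 < a n) (hl : ∀ n < N, 0 < l n) :
    (∑ n ∈ Finset.range N, l n *
        ((∑ i ∈ Finset.range (n + 1), l i * a i) / (∑ i ∈ Finset.range (n + 1), l i)) ^ (-p))
      - (p / (p + 1)) *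
        ∑ n ∈ Finset.range N, l n * a n *
          ((∑ i ∈ Finset.range (n + 1), l i * a i) / (∑ i ∈ Finset.range (n + 1), l i)) ^ (-p - 1)
      ≥ ((∑ i ∈ Finset.range N, l i) / (p + 1)) *
          ((∑ i ∈ Finset.range N, l i * a i) / (∑ i ∈ Finset.range N, l i)) ^ (-p) :=
  copson_lemma_strong_general p hp N a l ha hl
end

section
/- Let p > 0, let ε ∈ (0,1], let N be a positive integer, and let a_1,…,a_N and λ_1,…,λ_N be positive real numbers. Set Λ_n = λ_1 + ⋯ + λ_n and A_n = λ_1 a_1 + ⋯ + λ_n a_n. Then ∑_{n=1}^N λ_n a_n^ε (A_n/Λ_n)^{-p-ε} ≤ ((p+1)/p)^ε · ∑_{n=1}^N λ_n (A_n/Λ_n)^{-p}. -/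
/-!
The case `ε = 1` is the heart of the matter. With `gₙ = Aₙ/Λₙ`, the potential `Φₙ = Λₙ gₙ^{-p}`
satisfies `p λₙ aₙ gₙ^{-p-1} + Φₙ - Φₙ₋₁ ≤ (p+1) λₙ gₙ^{-p}`: after substituting
`λₙ aₙ = Λₙ gₙ - Λₙ₋₁ gₙ₋₁` this is `Λₙ₋₁` times the tangent-line inequality of the convex
function `x ↦ x^{-p}` at `gₙ`, evaluated at `gₙ₋₁`. Summing, the potentials telescope to
`Φ_N ≥ 0`. The general case follows by writing `λₙ aₙ^ε gₙ^{-p-ε}` as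
`(λₙ aₙ gₙ^{-p-1})^ε (λₙ gₙ^{-p})^{1-ε}` and interpolating with the weighted AM-GM inequality.
-/

open Finset Real

lemma rpow_neg_tangent_le_s8 {p g h : ℝ} (hp : 0 ≤ p) (hg : 0 < g) (hh : 0 < h) :
    (p + 1) * g ^ (-p) - p * h * g ^ (-p - 1) ≤ h ^ (-p) := by
  have hp1 : 0 < p + 1 := by linarith
  have amgm := geom_mean_le_arith_mean2_weighted (w₁ := 1 / (p + 1)) (w₂ := p / (p + 1))
    (p₁ := h ^ (-p)) (p₂ := h * g ^ (-p - 1)) (by positivity) (by positivity) (by positivity)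
    (by positivity) (by field_simp; ring)
  have geom : (h ^ (-p)) ^ (1 / (p + 1)) * (h * g ^ (-p - 1)) ^ (p / (p + 1)) = g ^ (-p) := by
    rw [mul_rpow hh.le (by positivity), ← rpow_mul hh.le, ← rpow_mul hg.le, ← mul_assoc,
      ← rpow_add hh]
    have e1 : -p * (1 / (p + 1)) + p / (p + 1) = 0 := by field_simp; ring
    have e2 : (-p - 1) * (p / (p + 1)) = -p := by field_simp; ring
    rw [e1, e2, rpow_zero, one_mul]
  rw [geom] at amgm
  have := mul_le_mul_of_nonneg_left amgm hp1.le
  field_simp at this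
  linarith

lemma mul_div_rpow_neg_increment_le_s8 {p L B dL dB : ℝ} (hp : 0 ≤ p)
    (hLB : 0 < L ∧ 0 < B ∨ L = 0 ∧ B = 0) (hdL : 0 < dL) (hdB : 0 < dB) :
    p * dB * ((B + dB) / (L + dL)) ^ (-p - 1)
        + ((L + dL) * ((B + dB) / (L + dL)) ^ (-p) - L * (B / L) ^ (-p))
      ≤ (p + 1) * dL * ((B + dB) / (L + dL)) ^ (-p) := by
  have hL' : 0 < L + dL := by rcases hLB with h | h <;> linarith [h.1]
  have hB' : 0 < B + dB := by rcases hLB with h | h <;> linarith [h.2]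
  set g := (B + dB) / (L + dL)
  have hg : 0 < g := div_pos hB' hL'
  have hmean : (L + dL) * g = B + dB := mul_div_cancel₀ _ hL'.ne'
  have hgg : g * g ^ (-p - 1) = g ^ (-p) := by
    rw [mul_comm, ← rpow_add_one hg.ne']; ring_nf
  have tangent : L * ((p + 1) * g ^ (-p)) - p * B * g ^ (-p - 1) ≤ L * (B / L) ^ (-p) := by
    rcases hLB with ⟨hL, hB⟩ | ⟨rfl, rfl⟩
    · have := mul_le_mul_of_nonneg_left (rpow_neg_tangent_le_s8 hp hg (div_pos hB hL)) hL.le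
      have hLdiv : L * (B / L) = B := mul_div_cancel₀ _ hL.ne'
      linear_combination this + p * g ^ (-p - 1) * hLdiv
    · simp
  linear_combination tangent - p * g ^ (-p - 1) * hmean + p * (L + dL) * hgg

lemma sum_range_pos_of_le {f : ℕ → ℝ} {N n : ℕ} (hf : ∀ i < N, 0 < f i) (hn : n ≤ N)
    (hn0 : 0 < n) : 0 < ∑ i ∈ range n, f i :=
  sum_pos (fun i hi => hf i ((mem_range.1 hi).trans_le hn)) (nonempty_range_iff.2 hn0.ne')

theorem copson_lemma_one {p : ℝ} (hp : 0 < p) (N : ℕ) (a l : ℕ → ℝ)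
    (ha : ∀ n < N, 0 < a n) (hl : ∀ n < N, 0 < l n) :
    ∑ n ∈ range N, l n * a n *
        ((∑ i ∈ range (n + 1), l i * a i) / ∑ i ∈ range (n + 1), l i) ^ (-p - 1)
      ≤ (p + 1) / p * ∑ n ∈ range N, l n *
        ((∑ i ∈ range (n + 1), l i * a i) / ∑ i ∈ range (n + 1), l i) ^ (-p) := by
  set Λ : ℕ → ℝ := fun n => ∑ i ∈ range n, l i
  set A : ℕ → ℝ := fun n => ∑ i ∈ range n, l i * a i
  set Φ : ℕ → ℝ := fun n => Λ n * (A n / Λ n) ^ (-p)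
  have hla : ∀ n < N, 0 < l n * a n := fun n hn => mul_pos (hl n hn) (ha n hn)
  have step : ∀ n < N, p * (l n * a n * (A (n + 1) / Λ (n + 1)) ^ (-p - 1))
      + (Φ (n + 1) - Φ n) ≤ (p + 1) * (l n * (A (n + 1) / Λ (n + 1)) ^ (-p)) := by
    intro n hn
    have hLB : 0 < Λ n ∧ 0 < A n ∨ Λ n = 0 ∧ A n = 0 := by
      rcases n.eq_zero_or_pos with rfl | hn0
      · simp [Λ, A]
      · exact .inl ⟨sum_range_pos_of_le hl hn.le hn0, sum_range_pos_of_le hla hn.le hn0⟩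
    have := mul_div_rpow_neg_increment_le_s8 hp.le hLB (hl n hn) (hla n hn)
    simp only [Φ, Λ, A, sum_range_succ] at this ⊢
    linarith
  have telescope := sum_le_sum fun n hn => step n (mem_range.1 hn)
  rw [sum_add_distrib, sum_range_sub, ← mul_sum, ← mul_sum] at telescope
  have hΦ0 : Φ 0 = 0 := by simp [Φ, Λ]
  have hΦN : 0 ≤ Φ N := mul_nonneg (sum_nonneg fun i hi => (hl i (mem_range.1 hi)).le)
    (rpow_nonneg (div_nonneg (sum_nonneg fun i hi => (hla i (mem_range.1 hi)).le)
      (sum_nonneg fun i hi => (hl i (mem_range.1 hi)).le)) _)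
  rw [div_mul_eq_mul_div, le_div_iff₀ hp]
  linarith

lemma sum_rpow_mul_rpow_le_of_sum_le {ι : Type*} (s : Finset ι) {x y : ι → ℝ} {C ε : ℝ}
    (hx : ∀ i ∈ s, 0 ≤ x i) (hy : ∀ i ∈ s, 0 ≤ y i) (hC : 0 < C) (hε0 : 0 ≤ ε) (hε1 : ε ≤ 1)
    (hxy : ∑ i ∈ s, x i ≤ C * ∑ i ∈ s, y i) :
    ∑ i ∈ s, x i ^ ε * y i ^ (1 - ε) ≤ C ^ ε * ∑ i ∈ s, y i := by
  have amgm : ∀ i ∈ s, x i ^ ε * y i ^ (1 - ε) ≤ C ^ ε * (ε / C * x i + (1 - ε) * y i) := by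
    intro i hi
    have := geom_mean_le_arith_mean2_weighted hε0 (sub_nonneg.2 hε1)
      (div_nonneg (hx i hi) hC.le) (hy i hi) (add_sub_cancel ε 1)
    rw [div_rpow (hx i hi) hC.le] at this
    have hCε : 0 < C ^ ε := rpow_pos_of_pos hC ε
    calc x i ^ ε * y i ^ (1 - ε) = C ^ ε * (x i ^ ε / C ^ ε * y i ^ (1 - ε)) := by
          field_simp
      _ ≤ C ^ ε * (ε * (x i / C) + (1 - ε) * y i) := by gcongr
      _ = C ^ ε * (ε / C * x i + (1 - ε) * y i) := by ring
  have hεx : ε / C * ∑ i ∈ s, x i ≤ ε * ∑ i ∈ s, y i := by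
    rw [div_mul_eq_mul_div, div_le_iff₀ hC]
    nlinarith
  calc ∑ i ∈ s, x i ^ ε * y i ^ (1 - ε)
      ≤ ∑ i ∈ s, C ^ ε * (ε / C * x i + (1 - ε) * y i) := sum_le_sum amgm
    _ = C ^ ε * (ε / C * ∑ i ∈ s, x i + (1 - ε) * ∑ i ∈ s, y i) := by
      rw [← mul_sum, sum_add_distrib, ← mul_sum, ← mul_sum]
    _ ≤ C ^ ε * ∑ i ∈ s, y i := by gcongr; linarith

lemma mul_rpow_mul_rpow_eq {l a g p ε : ℝ} (hl : 0 ≤ l) (ha : 0 ≤ a) (hg : 0 < g) :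
    (l * a * g ^ (-p - 1)) ^ ε * (l * g ^ (-p)) ^ (1 - ε) = l * a ^ ε * g ^ (-p - ε) := by
  rw [mul_rpow (by positivity) (by positivity), mul_rpow hl ha, mul_rpow hl (by positivity),
    ← rpow_mul hg.le, ← rpow_mul hg.le]
  have hl1 : l ^ ε * l ^ (1 - ε) = l := by
    rw [← rpow_add' hl (by norm_num), add_sub_cancel, rpow_one]
  have hg1 : g ^ ((-p - 1) * ε) * g ^ (-p * (1 - ε)) = g ^ (-p - ε) := by
    rw [← rpow_add hg]; ring_nf
  calc l ^ ε * a ^ ε * g ^ ((-p - 1) * ε) * (l ^ (1 - ε) * g ^ (-p * (1 - ε)))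
      = (l ^ ε * l ^ (1 - ε)) * a ^ ε * (g ^ ((-p - 1) * ε) * g ^ (-p * (1 - ε))) := by ring
    _ = l * a ^ ε * g ^ (-p - ε) := by rw [hl1, hg1]

theorem copson_lemma_eps_general (p ε : ℝ) (hp : 0 < p) (hε : ε ∈ Set.Ioc (0 : ℝ) 1)
    (N : ℕ) (a l : ℕ → ℝ)
    (ha : ∀ n < N, 0 < a n) (hl : ∀ n < N, 0 < l n) :
    (∑ n ∈ Finset.range N, l n * (a n) ^ ε *
        ((∑ i ∈ Finset.range (n + 1), l i * a i) / (∑ i ∈ Finset.range (n + 1), l i)) ^ (-p - ε))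
      ≤ ((p + 1) / p) ^ ε *
        ∑ n ∈ Finset.range N, l n *
          ((∑ i ∈ Finset.range (n + 1), l i * a i) / (∑ i ∈ Finset.range (n + 1), l i)) ^ (-p) := by
  have hmean : ∀ n < N,
      0 < (∑ i ∈ range (n + 1), l i * a i) / ∑ i ∈ range (n + 1), l i := fun n hn =>
    div_pos (sum_range_pos_of_le (fun i hi => mul_pos (hl i hi) (ha i hi)) hn n.succ_pos)
      (sum_range_pos_of_le hl hn n.succ_pos)
  rw [← sum_congr rfl fun n hn => mul_rpow_mul_rpow_eq (hl n (mem_range.1 hn)).le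
    (ha n (mem_range.1 hn)).le (hmean n (mem_range.1 hn))]
  refine sum_rpow_mul_rpow_le_of_sum_le _ (fun n hn => ?_) (fun n hn => ?_) (by positivity)
    hε.1.le hε.2 (copson_lemma_one hp N a l ha hl)
  all_goals
    rw [mem_range] at hn
    have := hmean n hn; have := hl n hn; have := ha n hn
    positivity

/-- **Inequality (2.7).** For `p > 0`, `ε ∈ (0,1]`, `N ≥ 1` and positive reals
`a₁,…,a_N`, `λ₁,…,λ_N`, with `Λₙ = λ₁ + ⋯ + λₙ` and `Aₙ = λ₁a₁ + ⋯ + λₙaₙ`,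
`∑ λₙ aₙ^ε (Aₙ/Λₙ)^{-p-ε} ≤ ((p+1)/p)^ε ∑ λₙ (Aₙ/Λₙ)^{-p}`. -/
theorem copson_lemma_eps (p ε : ℝ) (hp : 0 < p) (hε : ε ∈ Set.Ioc (0 : ℝ) 1)
    (N : ℕ) (hN : 0 < N) (a l : ℕ → ℝ)
    (ha : ∀ n < N, 0 < a n) (hl : ∀ n < N, 0 < l n) :
    (∑ n ∈ Finset.range N, l n * (a n) ^ ε *
        ((∑ i ∈ Finset.range (n + 1), l i * a i) / (∑ i ∈ Finset.range (n + 1), l i)) ^ (-p - ε))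
      ≤ ((p + 1) / p) ^ ε *
        ∑ n ∈ Finset.range N, l n *
          ((∑ i ∈ Finset.range (n + 1), l i * a i) / (∑ i ∈ Finset.range (n + 1), l i)) ^ (-p) :=
  copson_lemma_eps_general p ε hp hε N a l ha hl
end

section
/- Let q > 1, M ≥ 1, and let f : [0,1) → (0,∞) be monotone and satisfy the A_q condition with constant M on every interval of the form (0,t) and every interval of the form (t,1), for t ∈ (0,1). Then there exists a constant M'' depending only on M and q such that f satisfies the A_q condition with constant M'' on every subinterval (a,b) ⊆ [0,1). -/
/-!
Every subinterval `(a, b)` is compared with an interval `J` having an endpoint at `0` or `1`,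
on which the hypothesis applies, so that the averages over `(a, b)` of `f` and of its dual weight
`f ^ (-1 / (q - 1))` are at most three times their averages over `J`; this gives the constant
`3 ^ q * M`. If `(a, b)` fills at least half of `(0, b)` or of `(a, 1)`, take that interval.
Otherwise `(a, b)` is shorter than its distance `s` to the boundary, and `J` is `(a, b)` padded by
`s` on both sides: the two weights are monotone in opposite directions, so each has its average
over `(a, b)` dominated by its value at an endpoint, hence by its average over one of the pads.

Intervals reaching `1` require integrability on all of `(0, 1)`. It comes from the hypothesis on
`(0, t)`: both primitives are bounded below for `t ≥ 1 / 2`, so their `A_q` product being bounded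
bounds each of them.
-/

open MeasureTheory Set Filter Topology intervalIntegral

noncomputable section

def dualWeight (q : ℝ) (f : ℝ → ℝ) (x : ℝ) : ℝ := f x ^ (-(1 / (q - 1)))

def aqProduct (q : ℝ) (f : ℝ → ℝ) (a b : ℝ) : ℝ :=
  (⨍ x in a..b, f x) * (⨍ x in a..b, dualWeight q f x) ^ (q - 1)

end

theorem aqProduct_eq_integral (q : ℝ) (f : ℝ → ℝ) (a b : ℝ) :
    aqProduct q f a b = ((1 / (b - a)) * ∫ y in a..b, f y) *
      ((1 / (b - a)) * ∫ y in a..b, f y ^ (-(1 / (q - 1)))) ^ (q - 1) := by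
  simp only [aqProduct, dualWeight, interval_average_eq, smul_eq_mul, one_div]

variable {q M a b c d k m : ℝ} {f w : ℝ → ℝ}

theorem ae_restrict_Ioc_of_forall_Ioo {p : ℝ → Prop} (hp : ∀ x ∈ Ioo a b, p x) :
    ∀ᵐ x ∂volume.restrict (Ioc a b), p x := by
  rw [← ae_restrict_congr_set Ioo_ae_eq_Ioc]
  exact ae_restrict_of_forall_mem measurableSet_Ioo hp

theorem IntervalIntegrable.mono_Icc (hi : IntervalIntegrable w volume c d) (hca : c ≤ a)
    (hab : a ≤ b) (hbd : b ≤ d) : IntervalIntegrable w volume a b :=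
  hi.mono_set <| uIcc_subset_uIcc (mem_uIcc_of_le hca (hab.trans hbd))
    (mem_uIcc_of_le (hca.trans hab) hbd)

theorem interval_average_le_of_forall_le (hab : a < b) (hi : IntervalIntegrable w volume a b)
    (hle : ∀ x ∈ Ioo a b, w x ≤ m) : ⨍ x in a..b, w x ≤ m := by
  have := integral_mono_on_of_le_Ioo hab.le hi intervalIntegrable_const hle
  rw [intervalIntegral.integral_const, smul_eq_mul] at this
  rwa [interval_average_eq_div, div_le_iff₀ (sub_pos.2 hab), mul_comm]

theorem le_interval_average_of_forall_le (hab : a < b) (hi : IntervalIntegrable w volume a b)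
    (hle : ∀ x ∈ Ioo a b, m ≤ w x) : m ≤ ⨍ x in a..b, w x := by
  have := integral_mono_on_of_le_Ioo hab.le intervalIntegrable_const hi hle
  rw [intervalIntegral.integral_const, smul_eq_mul] at this
  rwa [interval_average_eq_div, le_div_iff₀ (sub_pos.2 hab), mul_comm]

theorem interval_average_le_mul_of_subset (hca : c ≤ a) (hab : a < b) (hbd : b ≤ d)
    (hk : d - c ≤ k * (b - a)) (hnn : ∀ x ∈ Ioo c d, 0 ≤ w x)
    (hi : IntervalIntegrable w volume c d) : ⨍ x in a..b, w x ≤ k * ⨍ x in c..d, w x := by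
  have hcd : c < d := hca.trans_lt (hab.trans_le hbd)
  have hsub : ∫ x in a..b, w x ≤ ∫ x in c..d, w x :=
    integral_mono_interval hca hab.le hbd (ae_restrict_Ioc_of_forall_Ioo hnn) hi
  have hJ : 0 ≤ ⨍ x in c..d, w x := le_interval_average_of_forall_le hcd hi hnn
  rw [interval_average_eq_div, div_le_iff₀ (sub_pos.2 hab)]
  calc ∫ x in a..b, w x ≤ ∫ x in c..d, w x := hsub
    _ = (⨍ x in c..d, w x) * (d - c) := by
        rw [interval_average_eq_div, div_mul_cancel₀ _ (sub_pos.2 hcd).ne']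
    _ ≤ (⨍ x in c..d, w x) * (k * (b - a)) := by gcongr
    _ = k * (⨍ x in c..d, w x) * (b - a) := by ring

theorem interval_average_le_mul_of_monotoneOn (hmono : MonotoneOn w (Ioo c d))
    (hnn : ∀ x ∈ Ioo c d, 0 ≤ w x) (hi : IntervalIntegrable w volume c d) {b' : ℝ}
    (hca : c ≤ a) (hab : a < b) (hbb' : b < b') (hb'd : b' ≤ d) (hk : d - c ≤ k * (b' - b)) :
    ⨍ x in a..b, w x ≤ k * ⨍ x in c..d, w x := by
  have hb : b ∈ Ioo c d := ⟨hca.trans_lt hab, hbb'.trans_le hb'd⟩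
  calc ⨍ x in a..b, w x ≤ w b :=
        interval_average_le_of_forall_le hab (hi.mono_Icc hca hab.le hb.2.le)
          fun x hx => hmono ⟨hca.trans_lt hx.1, hx.2.trans hb.2⟩ hb hx.2.le
    _ ≤ ⨍ x in b..b', w x :=
        le_interval_average_of_forall_le hbb' (hi.mono_Icc hb.1.le hbb'.le hb'd)
          fun x hx => hmono hb ⟨hb.1.trans hx.1, hx.2.trans_le hb'd⟩ hx.1.le
    _ ≤ k * ⨍ x in c..d, w x :=
        interval_average_le_mul_of_subset hb.1.le hbb' hb'd hk hnn hi

theorem interval_average_le_mul_of_antitoneOn (hanti : AntitoneOn w (Ioo c d))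
    (hnn : ∀ x ∈ Ioo c d, 0 ≤ w x) (hi : IntervalIntegrable w volume c d) {a' : ℝ}
    (hca' : c ≤ a') (ha'a : a' < a) (hab : a < b) (hbd : b ≤ d) (hk : d - c ≤ k * (a - a')) :
    ⨍ x in a..b, w x ≤ k * ⨍ x in c..d, w x := by
  have ha : a ∈ Ioo c d := ⟨hca'.trans_lt ha'a, hab.trans_le hbd⟩
  calc ⨍ x in a..b, w x ≤ w a :=
        interval_average_le_of_forall_le hab (hi.mono_Icc ha.1.le hab.le hbd)
          fun x hx => hanti ha ⟨ha.1.trans hx.1, hx.2.trans_le hbd⟩ hx.1.le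
    _ ≤ ⨍ x in a'..a, w x :=
        le_interval_average_of_forall_le ha'a (hi.mono_Icc hca' ha'a.le ha.2.le)
          fun x hx => hanti ⟨hca'.trans_lt hx.1, hx.2.trans ha.2⟩ ha hx.2.le
    _ ≤ k * ⨍ x in c..d, w x :=
        interval_average_le_mul_of_subset hca' ha'a ha.2.le hk hnn hi

theorem exists_boundary_interval_average_le (ha : 0 ≤ a) (hab : a < b) (hb : b ≤ 1) :
    ∃ c d, 0 ≤ c ∧ c < d ∧ d ≤ 1 ∧ (c = 0 ∨ d = 1) ∧
      ∀ w : ℝ → ℝ, (∀ x ∈ Ioo 0 1, 0 ≤ w x) → IntervalIntegrable w volume 0 1 →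
        (MonotoneOn w (Ioo 0 1) ∨ AntitoneOn w (Ioo 0 1)) →
        ⨍ x in a..b, w x ≤ 3 * ⨍ x in c..d, w x := by
  by_cases hleft : 2 * a ≤ b
  · refine ⟨0, b, le_rfl, ha.trans_lt hab, hb, .inl rfl, fun w hnn hi _ => ?_⟩
    exact interval_average_le_mul_of_subset ha hab le_rfl (by linarith)
      (fun x hx => hnn x ⟨hx.1, hx.2.trans_le hb⟩) (hi.mono_Icc le_rfl (ha.trans hab.le) hb)
  by_cases hright : 1 + a ≤ 2 * b
  · refine ⟨a, 1, ha, hab.trans_le hb, le_rfl, .inr rfl, fun w hnn hi _ => ?_⟩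
    exact interval_average_le_mul_of_subset le_rfl hab hb (by linarith)
      (fun x hx => hnn x ⟨ha.trans_lt hx.1, hx.2⟩) (hi.mono_Icc ha (hab.le.trans hb) le_rfl)
  set s := min a (1 - b) with hs
  have hsI : b - a ≤ s := le_min (by linarith) (by linarith)
  have hc : 0 ≤ a - s := sub_nonneg.2 (min_le_left _ _)
  have hd : b + s ≤ 1 := by linarith [min_le_right a (1 - b)]
  refine ⟨a - s, b + s, hc, by linarith, hd, ?_, fun w hnn hi hmono => ?_⟩
  · rcases min_choice a (1 - b) with hmin | hmin
    · exact .inl (by rw [hs, hmin, sub_self])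
    · exact .inr (by rw [hs, hmin]; ring)
  have hnn' : ∀ x ∈ Ioo (a - s) (b + s), 0 ≤ w x :=
    fun x hx => hnn x ⟨hc.trans_lt hx.1, hx.2.trans_le hd⟩
  have hi' := hi.mono_Icc hc (by linarith) hd
  rcases hmono with hmono | hanti
  · exact interval_average_le_mul_of_monotoneOn (hmono.mono (Ioo_subset_Ioo hc hd)) hnn' hi'
      (by linarith) hab (by linarith) le_rfl (by linarith)
  · exact interval_average_le_mul_of_antitoneOn (hanti.mono (Ioo_subset_Ioo hc hd)) hnn' hi'
      le_rfl (by linarith) hab (by linarith) (by linarith)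

theorem dualWeight_pos {x : ℝ} (hx : 0 < f x) : 0 < dualWeight q f x :=
  Real.rpow_pos_of_pos hx _

theorem antitoneOn_dualWeight {s : Set ℝ} (hq : 1 ≤ q) (hpos : ∀ x ∈ s, 0 < f x)
    (hf : MonotoneOn f s) : AntitoneOn (dualWeight q f) s := fun x hx _ hy hxy =>
  Real.rpow_le_rpow_of_nonpos (hpos x hx) (hf hx hy hxy) (by simpa using sub_nonneg.2 hq)

theorem monotoneOn_dualWeight {s : Set ℝ} (hq : 1 ≤ q) (hpos : ∀ x ∈ s, 0 < f x)
    (hf : AntitoneOn f s) : MonotoneOn (dualWeight q f) s := fun _ hx y hy hxy =>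
  Real.rpow_le_rpow_of_nonpos (hpos y hy) (hf hx hy hxy) (by simpa using sub_nonneg.2 hq)

theorem dualWeight_monotoneOn_or_antitoneOn {s : Set ℝ} (hq : 1 ≤ q) (hpos : ∀ x ∈ s, 0 < f x)
    (hf : MonotoneOn f s ∨ AntitoneOn f s) :
    MonotoneOn (dualWeight q f) s ∨ AntitoneOn (dualWeight q f) s :=
  hf.symm.imp (monotoneOn_dualWeight hq hpos) (antitoneOn_dualWeight hq hpos)

theorem aqProduct_le_rpow_mul_of_average_le (hq : 1 ≤ q) (hk : 0 < k)
    (hf₀ : 0 ≤ ⨍ x in a..b, f x) (hg₀ : 0 ≤ ⨍ x in a..b, dualWeight q f x)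
    (hf : ⨍ x in a..b, f x ≤ k * ⨍ x in c..d, f x)
    (hg : ⨍ x in a..b, dualWeight q f x ≤ k * ⨍ x in c..d, dualWeight q f x) :
    aqProduct q f a b ≤ k ^ q * aqProduct q f c d := by
  have hg₁ : 0 ≤ ⨍ x in c..d, dualWeight q f x := (mul_nonneg_iff_of_pos_left hk).1 (hg₀.trans hg)
  calc aqProduct q f a b
      ≤ (k * ⨍ x in c..d, f x) * (k * ⨍ x in c..d, dualWeight q f x) ^ (q - 1) :=
        mul_le_mul hf (Real.rpow_le_rpow hg₀ hg (sub_nonneg.2 hq)) (by positivity)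
          (hf₀.trans hf)
    _ = k ^ q * aqProduct q f c d := by
        rw [aqProduct, Real.mul_rpow hk.le hg₁, Real.rpow_sub_one hk.ne']
        field_simp

theorem continuousOn_interval_average_right (hi : IntervalIntegrable w volume a b) :
    ContinuousOn (fun t => ⨍ x in a..t, w x) (Ioc a b) := by
  simp_rw [interval_average_eq, smul_eq_mul]
  refine ContinuousOn.mul ?_ ((continuousOn_primitive_interval' hi left_mem_uIcc).mono
    (Ioc_subset_Icc_self.trans Icc_subset_uIcc))
  exact (continuousOn_id.sub continuousOn_const).inv₀ fun t ht => (sub_pos.2 ht.1).ne'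

theorem aqProduct_le_of_forall_lt_right (hq : 1 ≤ q) (hab : a < b)
    (hf : IntervalIntegrable f volume a b) (hg : IntervalIntegrable (dualWeight q f) volume a b)
    (hbound : ∀ t ∈ Ioo a b, aqProduct q f a t ≤ M) : aqProduct q f a b ≤ M := by
  have hcont : ContinuousOn (aqProduct q f a) (Ioc a b) :=
    (continuousOn_interval_average_right hf).mul
      ((continuousOn_interval_average_right hg).rpow_const fun _ _ => .inr (sub_nonneg.2 hq))
  refine ContinuousWithinAt.closure_le ?_ ((hcont b ⟨hab, le_rfl⟩).mono Ioo_subset_Ioc_self)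
    continuousWithinAt_const hbound
  rw [closure_Ioo hab.ne]
  exact right_mem_Icc.2 hab.le

theorem intervalIntegrable_of_eventually_integral_le {C : ℝ} (hab : a < b)
    (hloc : ∀ t ∈ Ioo a b, IntervalIntegrable w volume a t) (hnn : ∀ x ∈ Ioo a b, 0 ≤ w x)
    (hbd : ∀ᶠ t in 𝓝[<] b, ∫ x in a..t, w x ≤ C) : IntervalIntegrable w volume a b := by
  set u : ℕ → ℝ := fun n => b - 1 / (n + 1)
  have hub : ∀ n, u n < b := fun n => sub_lt_self b Nat.one_div_pos_of_nat
  have hu : Tendsto u atTop (𝓝[<] b) := tendsto_nhdsWithin_iff.2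
    ⟨by simpa [u] using
        (tendsto_const_nhds (x := b)).sub (tendsto_one_div_add_atTop_nhds_zero_nat (𝕜 := ℝ)),
      Eventually.of_forall hub⟩
  rw [intervalIntegrable_iff_integrableOn_Ioc_of_le hab.le]
  refine integrableOn_Ioc_of_intervalIntegral_norm_bounded_right (I := C) (fun n => ?_)
    (tendsto_nhdsWithin_iff.1 hu).1 ?_
  · rcases le_or_gt (u n) a with hua | hau
    · rw [Ioc_eq_empty hua.not_gt]
      exact integrableOn_empty
    · exact (intervalIntegrable_iff_integrableOn_Ioc_of_le hau.le).1 (hloc _ ⟨hau, hub n⟩)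
  · filter_upwards [hu.eventually hbd, hu.eventually (Ioo_mem_nhdsLT hab)] with n hn hn'
    rw [integral_of_le hn'.1.le] at hn
    refine le_of_eq_of_le (setIntegral_congr_fun measurableSet_Ioc fun x hx => ?_) hn
    exact Real.norm_of_nonneg (hnn x ⟨hx.1, hx.2.trans_lt hn'.2⟩)

theorem integral_mul_integral_rpow_le_of_aqProduct_le (hq : 1 ≤ q) (hM : 0 ≤ M) (hab : a < b)
    (hba : b - a ≤ 1) (hg : 0 ≤ ∫ x in a..b, dualWeight q f x) (hbound : aqProduct q f a b ≤ M) :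
    (∫ x in a..b, f x) * (∫ x in a..b, dualWeight q f x) ^ (q - 1) ≤ M := by
  have hL : 0 < b - a := sub_pos.2 hab
  have hr : 0 ≤ q - 1 := sub_nonneg.2 hq
  have hg₀ : 0 ≤ ⨍ x in a..b, dualWeight q f x := by
    rw [interval_average_eq_div]; positivity
  have hint : ∀ w : ℝ → ℝ, ∫ x in a..b, w x = (b - a) * ⨍ x in a..b, w x := fun w => by
    rw [interval_average_eq_div, mul_div_cancel₀ _ hL.ne']
  rw [hint f, hint (dualWeight q f), Real.mul_rpow hL.le hg₀]
  calc (b - a) * (⨍ x in a..b, f x) *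
        ((b - a) ^ (q - 1) * (⨍ x in a..b, dualWeight q f x) ^ (q - 1))
      = ((b - a) * (b - a) ^ (q - 1)) * aqProduct q f a b := by rw [aqProduct]; ring
    _ ≤ ((b - a) * (b - a) ^ (q - 1)) * M := by gcongr
    _ ≤ 1 * M := by
        gcongr
        exact mul_le_one₀ hba (by positivity) (Real.rpow_le_one hL.le hba hr)
    _ = M := one_mul M

theorem intervalIntegrable_of_monotoneOn_or_antitoneOn {s : Set ℝ}
    (hmono : MonotoneOn w s ∨ AntitoneOn w s) (hs : uIcc a b ⊆ s) :
    IntervalIntegrable w volume a b :=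
  hmono.elim (fun hw => (hw.mono hs).intervalIntegrable) (fun hw => (hw.mono hs).intervalIntegrable)

theorem le_div_rpow_and_le_rpow_inv_of_mul_rpow_le {A B A₀ B₀ r : ℝ} (hr : 0 < r)
    (hA₀ : 0 < A₀) (hB₀ : 0 < B₀) (hA : A₀ ≤ A) (hB : B₀ ≤ B) (hAB : A * B ^ r ≤ M) :
    A ≤ M / B₀ ^ r ∧ B ≤ (M / A₀) ^ r⁻¹ := by
  have hApos : 0 < A := hA₀.trans_le hA
  have hBpos : 0 < B := hB₀.trans_le hB
  have hBr : B₀ ^ r ≤ B ^ r := Real.rpow_le_rpow hB₀.le hB hr.le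
  have hM : 0 ≤ M := (by positivity : 0 ≤ A * B ^ r).trans hAB
  constructor
  · rw [le_div_iff₀ (by positivity)]
    exact (mul_le_mul_of_nonneg_left hBr hApos.le).trans hAB
  · rw [Real.le_rpow_inv_iff_of_pos hBpos.le (by positivity) hr, le_div_iff₀ hA₀,
      mul_comm]
    exact (mul_le_mul_of_nonneg_right hA (by positivity)).trans hAB

theorem intervalIntegrable_of_aqProduct_le (hq : 1 < q) (hM : 0 ≤ M)
    (hpos : ∀ x ∈ Ioo 0 1, 0 < f x) (hf : ∀ t ∈ Ioo 0 1, IntervalIntegrable f volume 0 t)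
    (hg : ∀ t ∈ Ioo 0 1, IntervalIntegrable (dualWeight q f) volume 0 t)
    (hbound : ∀ t ∈ Ioo 0 1, aqProduct q f 0 t ≤ M) :
    IntervalIntegrable f volume 0 1 ∧ IntervalIntegrable (dualWeight q f) volume 0 1 := by
  have hr : 0 < q - 1 := sub_pos.2 hq
  have hgpos : ∀ x ∈ Ioo 0 1, 0 < dualWeight q f x := fun x hx => dualWeight_pos (hpos x hx)
  have hhalf : (1 / 2 : ℝ) ∈ Ioo 0 1 := by norm_num
  have lower : ∀ {w : ℝ → ℝ}, (∀ x ∈ Ioo 0 1, 0 < w x) →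
      (∀ t ∈ Ioo 0 1, IntervalIntegrable w volume 0 t) → ∀ t ∈ Ioo (1 / 2) 1,
        0 < ∫ x in 0..1 / 2, w x ∧ ∫ x in 0..1 / 2, w x ≤ ∫ x in 0..t, w x :=
    fun hp hi t ht =>
      ⟨intervalIntegral_pos_of_pos_on (hi _ hhalf)
          (fun x hx => hp x ⟨hx.1, hx.2.trans hhalf.2⟩) hhalf.1,
        integral_mono_interval le_rfl hhalf.1.le ht.1.le
          (ae_restrict_Ioc_of_forall_Ioo fun x hx => (hp x ⟨hx.1, hx.2.trans ht.2⟩).le)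
          (hi t ⟨hhalf.1.trans ht.1, ht.2⟩)⟩
  have hprod : ∀ t ∈ Ioo (1 / 2) 1,
      (∫ x in 0..t, f x) * (∫ x in 0..t, dualWeight q f x) ^ (q - 1) ≤ M := fun t ht =>
    integral_mul_integral_rpow_le_of_aqProduct_le hq.le hM (hhalf.1.trans ht.1) (by linarith [ht.2])
      ((lower hgpos hg t ht).1.le.trans (lower hgpos hg t ht).2)
      (hbound t ⟨hhalf.1.trans ht.1, ht.2⟩)
  have hbounds : ∀ t ∈ Ioo (1 / 2) 1,
      ∫ x in 0..t, f x ≤ M / (∫ x in 0..1 / 2, dualWeight q f x) ^ (q - 1) ∧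
        ∫ x in 0..t, dualWeight q f x ≤ (M / ∫ x in 0..1 / 2, f x) ^ (q - 1)⁻¹ := fun t ht =>
    le_div_rpow_and_le_rpow_inv_of_mul_rpow_le hr (lower hpos hf t ht).1 (lower hgpos hg t ht).1
      (lower hpos hf t ht).2 (lower hgpos hg t ht).2 (hprod t ht)
  have hnear : Ioo (1 / 2 : ℝ) 1 ∈ 𝓝[<] 1 := Ioo_mem_nhdsLT hhalf.2
  exact ⟨intervalIntegrable_of_eventually_integral_le one_pos hf (fun x hx => (hpos x hx).le)
      (Filter.mem_of_superset hnear fun t ht => (hbounds t ht).1),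
    intervalIntegrable_of_eventually_integral_le one_pos hg (fun x hx => (hgpos x hx).le)
      (Filter.mem_of_superset hnear fun t ht => (hbounds t ht).2)⟩

theorem aqProduct_le_of_eq_zero_or_eq_one (hq : 1 ≤ q) (hf : IntervalIntegrable f volume 0 1)
    (hg : IntervalIntegrable (dualWeight q f) volume 0 1)
    (hbound : ∀ t ∈ Ioo 0 1, aqProduct q f 0 t ≤ M ∧ aqProduct q f t 1 ≤ M)
    (hc : 0 ≤ c) (hcd : c < d) (hd : d ≤ 1) (hend : c = 0 ∨ d = 1) : aqProduct q f c d ≤ M := by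
  have hzero_one : aqProduct q f 0 1 ≤ M :=
    aqProduct_le_of_forall_lt_right hq zero_lt_one hf hg fun t ht => (hbound t ht).1
  rcases hend with rfl | rfl
  · rcases hd.lt_or_eq with hd | rfl
    · exact (hbound d ⟨hcd, hd⟩).1
    · exact hzero_one
  · rcases hc.lt_or_eq with hc | rfl
    · exact (hbound c ⟨hc, hcd⟩).2
    · exact hzero_one

theorem aqProduct_le_three_rpow_mul (hq : 1 < q) (hpos : ∀ x ∈ Ioo 0 1, 0 < f x)
    (hmono : MonotoneOn f (Ioo 0 1) ∨ AntitoneOn f (Ioo 0 1))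
    (hf : IntervalIntegrable f volume 0 1) (hg : IntervalIntegrable (dualWeight q f) volume 0 1)
    (hbound : ∀ t ∈ Ioo 0 1, aqProduct q f 0 t ≤ M ∧ aqProduct q f t 1 ≤ M)
    (ha : 0 ≤ a) (hab : a < b) (hb : b ≤ 1) : aqProduct q f a b ≤ 3 ^ q * M := by
  have hgpos : ∀ x ∈ Ioo 0 1, 0 < dualWeight q f x := fun x hx => dualWeight_pos (hpos x hx)
  have average_nonneg : ∀ w : ℝ → ℝ, (∀ x ∈ Ioo 0 1, 0 < w x) →
      IntervalIntegrable w volume 0 1 → 0 ≤ ⨍ x in a..b, w x := fun w hp hi =>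
    le_interval_average_of_forall_le hab (hi.mono_Icc ha hab.le hb)
      fun x hx => (hp x ⟨ha.trans_lt hx.1, hx.2.trans_le hb⟩).le
  obtain ⟨c, d, hc, hcd, hd, hend, hcmp⟩ := exists_boundary_interval_average_le ha hab hb
  calc aqProduct q f a b ≤ 3 ^ q * aqProduct q f c d :=
        aqProduct_le_rpow_mul_of_average_le hq.le three_pos (average_nonneg f hpos hf)
          (average_nonneg _ hgpos hg) (hcmp f (fun x hx => (hpos x hx).le) hf hmono)
          (hcmp _ (fun x hx => (hgpos x hx).le) hg
            (dualWeight_monotoneOn_or_antitoneOn hq.le hpos hmono))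
    _ ≤ 3 ^ q * M := by
        gcongr
        exact aqProduct_le_of_eq_zero_or_eq_one hq.le hf hg hbound hc hcd hd hend

/-- **Theorem F.** Let `q > 1` and `M ≥ 1`. There is a constant `M''`, depending only
on `M` and `q`, such that every monotone `f : [0,1) → (0,∞)` satisfying the `A_q`
condition with constant `M` on every interval `(0,t)` and every interval `(t,1)`,
`t ∈ (0,1)`, satisfies the `A_q` condition with constant `M''` on every subinterval
`(a,b) ⊆ [0,1)`. -/
theorem muckenhoupt_Aq_from_endpoints (q M : ℝ) (hq : 1 < q) (hM : 1 ≤ M) :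
    ∃ M'' : ℝ, 0 < M'' ∧ ∀ f : ℝ → ℝ, Measurable f →
      (∀ x ∈ Set.Ico (0 : ℝ) 1, 0 < f x) →
      (MonotoneOn f (Set.Ico 0 1) ∨ AntitoneOn f (Set.Ico 0 1)) →
      (∀ t ∈ Set.Ioo (0 : ℝ) 1,
        ((1 / t) * ∫ y in (0 : ℝ)..t, f y) *
            ((1 / t) * ∫ y in (0 : ℝ)..t, f y ^ (-(1 / (q - 1)))) ^ (q - 1) ≤ M ∧
        ((1 / (1 - t)) * ∫ y in t..(1 : ℝ), f y) *
            ((1 / (1 - t)) * ∫ y in t..(1 : ℝ), f y ^ (-(1 / (q - 1)))) ^ (q - 1) ≤ M) →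
      ∀ a b : ℝ, 0 ≤ a → a < b → b ≤ 1 →
        ((1 / (b - a)) * ∫ y in a..b, f y) *
          ((1 / (b - a)) * ∫ y in a..b, f y ^ (-(1 / (q - 1)))) ^ (q - 1) ≤ M'' := by
  refine ⟨3 ^ q * M, by positivity, fun f _ hpos hmono hyp a b ha hab hb => ?_⟩
  have hyp' : ∀ t ∈ Ioo 0 1, aqProduct q f 0 t ≤ M ∧ aqProduct q f t 1 ≤ M := fun t ht => by
    simpa only [aqProduct_eq_integral, sub_zero] using hyp t ht
  rw [← aqProduct_eq_integral]
  have hpos' : ∀ x ∈ Ioo 0 1, 0 < f x := fun x hx => hpos x (Ioo_subset_Ico_self hx)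
  have hloc : ∀ t ∈ Ioo (0 : ℝ) 1, uIcc 0 t ⊆ Ico 0 1 := fun t ht => by
    rw [uIcc_of_le ht.1.le]
    exact Icc_subset_Ico_right ht.2
  obtain ⟨hf, hg⟩ := intervalIntegrable_of_aqProduct_le hq (by linarith) hpos'
    (fun t ht => intervalIntegrable_of_monotoneOn_or_antitoneOn hmono (hloc t ht))
    (fun t ht => intervalIntegrable_of_monotoneOn_or_antitoneOn
      (dualWeight_monotoneOn_or_antitoneOn hq.le hpos hmono) (hloc t ht))
    fun t ht => (hyp' t ht).1
  exact aqProduct_le_three_rpow_mul hq hpos'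
    (hmono.imp (·.mono Ioo_subset_Ico_self) (·.mono Ioo_subset_Ico_self)) hf hg hyp' ha hab hb
end

section
/- Let p ≥ q > 0 and let d ∈ (0, 1/p). For the function f(x) = x^d on [0,1], ∫_0^1 ((1/x) ∫_0^x f(y) dy)^{-p} dx = (d+1)^q · ∫_0^1 ((1/x) ∫_0^x f(y) dy)^{-p+q} f(x)^{-q} dx, and both integrals are finite. Consequently, since (d+1)^q → ((p+1)/p)^q as d → (1/p)^−, the constant ((p+1)/p)^q in the inequality ∫_0^1 ((1/x) ∫_0^x f)^{-p} dx ≤ ((p+1)/p)^q ∫_0^1 ((1/x) ∫_0^x f)^{-p+q} f^{-q} dx cannot be replaced by any smaller constant. -/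
/-!
For `f(x) = x^d` the average `(1/x) ∫_0^x f` is `x^d / (d+1)`, so both integrands are constant
multiples of `x^{-dp}`, namely `(d+1)^p x^{-dp}` and `(d+1)^{p-q} x^{-dp}`, which are integrable
on `(0,1]` exactly when `dp < 1`. Their ratio is `(d+1)^q`; letting `d ↑ 1/p` pushes it up to
`(1/p + 1)^q = ((p+1)/p)^q`.
-/

open MeasureTheory Set intervalIntegral

lemma average_rpow_eq {d x : ℝ} (hd : -1 < d) (hx : 0 < x) :
    (1 / x) * ∫ y in (0 : ℝ)..x, y ^ d = x ^ d / (d + 1) := by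
  have hd1 : d + 1 ≠ 0 := by linarith
  rw [integral_rpow (Or.inl hd), Real.zero_rpow hd1, Real.rpow_add_one hx.ne' d]
  field_simp
  ring

lemma average_rpow_rpow_eq {d x : ℝ} (r : ℝ) (hd : -1 < d) (hx : 0 < x) :
    ((1 / x) * ∫ y in (0 : ℝ)..x, y ^ d) ^ r = (d + 1) ^ (-r) * x ^ (d * r) := by
  have hd1 : 0 < d + 1 := by linarith
  rw [average_rpow_eq hd hx, Real.div_rpow (Real.rpow_nonneg hx.le d) hd1.le,
    ← Real.rpow_mul hx.le, Real.rpow_neg hd1.le, div_eq_inv_mul]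

lemma integrableOn_and_integral_eq_of_eqOn_const_mul_rpow {g : ℝ → ℝ} {c s : ℝ}
    (hs : -1 < s) (hg : EqOn g (fun x ↦ c * x ^ s) (Ioc 0 1)) :
    IntegrableOn g (Ioc 0 1) ∧ ∫ x in (0 : ℝ)..1, g x = c / (s + 1) := by
  have hint : IntegrableOn (fun x : ℝ ↦ x ^ s) (Ioc 0 1) :=
    (intervalIntegrable_iff_integrableOn_Ioc_of_le zero_le_one).mp (intervalIntegrable_rpow' hs)
  refine ⟨IntegrableOn.congr_fun (hint.const_mul c) hg.symm measurableSet_Ioc, ?_⟩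
  have hg' : ∀ x ∈ uIoc (0 : ℝ) 1, g x = c * x ^ s := fun x hx ↦
    hg (by rwa [uIoc_of_le zero_le_one] at hx)
  rw [integral_congr_ae (Filter.Eventually.of_forall hg'),
    intervalIntegral.integral_const_mul, integral_rpow (Or.inl hs), Real.one_rpow,
    Real.zero_rpow (by linarith), sub_zero, mul_one_div]

lemma eqOn_average_rpow_rpow_neg {d : ℝ} (p : ℝ) (hd : -1 < d) :
    EqOn (fun x : ℝ ↦ ((1 / x) * ∫ y in (0 : ℝ)..x, y ^ d) ^ (-p))
      (fun x ↦ (d + 1) ^ p * x ^ (-(d * p))) (Ioc 0 1) := fun x hx ↦ by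
  simp only [average_rpow_rpow_eq _ hd hx.1, neg_neg, mul_neg]

lemma eqOn_average_rpow_rpow_mul_rpow {d : ℝ} (p q : ℝ) (hd : -1 < d) :
    EqOn (fun x : ℝ ↦ ((1 / x) * ∫ y in (0 : ℝ)..x, y ^ d) ^ (-p + q) * (x ^ d) ^ (-q))
      (fun x ↦ (d + 1) ^ (p - q) * x ^ (-(d * p))) (Ioc 0 1) := fun x hx ↦ by
  dsimp only
  rw [average_rpow_rpow_eq _ hd hx.1, ← Real.rpow_mul hx.1.le, mul_assoc,
    ← Real.rpow_add hx.1, neg_add, neg_neg, ← sub_eq_neg_add]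
  ring_nf

lemma hardy_equality_rpow {p q d : ℝ} (hd : -1 < d) (hdp : d * p < 1) :
    IntegrableOn (fun x : ℝ ↦ ((1 / x) * ∫ y in (0 : ℝ)..x, y ^ d) ^ (-p)) (Ioc 0 1) ∧
      IntegrableOn
        (fun x : ℝ ↦ ((1 / x) * ∫ y in (0 : ℝ)..x, y ^ d) ^ (-p + q) * (x ^ d) ^ (-q))
        (Ioc 0 1) ∧
      (∫ x in (0 : ℝ)..1, ((1 / x) * ∫ y in (0 : ℝ)..x, y ^ d) ^ (-p)) =
        (d + 1) ^ q *
          ∫ x in (0 : ℝ)..1,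
            ((1 / x) * ∫ y in (0 : ℝ)..x, y ^ d) ^ (-p + q) * (x ^ d) ^ (-q) ∧
      0 < ∫ x in (0 : ℝ)..1,
            ((1 / x) * ∫ y in (0 : ℝ)..x, y ^ d) ^ (-p + q) * (x ^ d) ^ (-q) := by
  have hd1 : 0 < d + 1 := by linarith
  have hs : -1 < -(d * p) := by linarith
  obtain ⟨hintL, hL⟩ := integrableOn_and_integral_eq_of_eqOn_const_mul_rpow hs
    (eqOn_average_rpow_rpow_neg p hd)
  obtain ⟨hintR, hR⟩ := integrableOn_and_integral_eq_of_eqOn_const_mul_rpow hs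
    (eqOn_average_rpow_rpow_mul_rpow p q hd)
  refine ⟨hintL, hintR, ?_, ?_⟩
  · rw [hL, hR, mul_div_assoc', ← Real.rpow_add hd1, add_sub_cancel]
  · rw [hR]
    exact div_pos (Real.rpow_pos_of_pos hd1 _) (by linarith)

theorem hardy_negative_exponent_sharp_general (p q d : ℝ) (hq : 0 < q)
    (hd : d ∈ Set.Ioo 0 (1 / p)) :
    (∫ x in (0 : ℝ)..1, ((1 / x) * ∫ y in (0 : ℝ)..x, y ^ d) ^ (-p)) =
        (d + 1) ^ q *
          ∫ x in (0 : ℝ)..1,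
            ((1 / x) * ∫ y in (0 : ℝ)..x, y ^ d) ^ (-p + q) * (x ^ d) ^ (-q) ∧
      IntegrableOn (fun x : ℝ => ((1 / x) * ∫ y in (0 : ℝ)..x, y ^ d) ^ (-p))
        (Set.Ioc 0 1) ∧
      IntegrableOn
        (fun x : ℝ => ((1 / x) * ∫ y in (0 : ℝ)..x, y ^ d) ^ (-p + q) * (x ^ d) ^ (-q))
        (Set.Ioc 0 1) ∧
      ∀ C : ℝ, 0 ≤ C →
        (∀ d' ∈ Set.Ioo (0 : ℝ) (1 / p),
          (∫ x in (0 : ℝ)..1, ((1 / x) * ∫ y in (0 : ℝ)..x, y ^ d') ^ (-p)) ≤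
            C * ∫ x in (0 : ℝ)..1,
              ((1 / x) * ∫ y in (0 : ℝ)..x, y ^ d') ^ (-p + q) * (x ^ d') ^ (-q)) →
        ((p + 1) / p) ^ q ≤ C := by
  have hp : 0 < p := one_div_pos.mp (hd.1.trans hd.2)
  have hdp : ∀ d' ∈ Ioo 0 (1 / p), d' * p < 1 := fun d' hd' ↦ by
    simpa using (lt_div_iff₀ hp).mp hd'.2
  obtain ⟨hintL, hintR, heq, -⟩ := hardy_equality_rpow (q := q) (by linarith [hd.1]) (hdp d hd)
  refine ⟨heq, hintL, hintR, fun C _ hC ↦ ?_⟩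
  have hratio : ∀ d' ∈ Ioo 0 (1 / p), (d' + 1) ^ q ≤ C := fun d' hd' ↦ by
    obtain ⟨-, -, heq', hpos⟩ := hardy_equality_rpow (q := q) (by linarith [hd'.1]) (hdp d' hd')
    exact le_of_mul_le_mul_right (heq' ▸ hC d' hd') hpos
  have hcont : Continuous fun t : ℝ ↦ (t + 1) ^ q :=
    (continuous_add_const 1).rpow_const fun _ ↦ Or.inr hq.le
  have hmem : 1 / p ∈ closure (Ioo 0 (1 / p)) := by
    rw [closure_Ioo (by positivity)]
    exact right_mem_Icc.mpr (by positivity)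
  calc ((p + 1) / p) ^ q = (1 / p + 1) ^ q := by rw [add_div, div_self hp.ne', add_comm]
    _ ≤ C := hcont.continuousWithinAt.closure_le hmem continuousWithinAt_const hratio

/-- **Sharpness of Theorem 1.** For `p ≥ q > 0` and `d ∈ (0, 1/p)`, the function
`f(x) = x^d` on `[0,1]` gives equality
`∫_0^1 ((1/x)∫_0^x f)^{-p} dx = (d+1)^q ∫_0^1 ((1/x)∫_0^x f)^{-p+q} f(x)^{-q} dx`,
with both integrals finite; consequently (since `(d+1)^q → ((p+1)/p)^q` as
`d → (1/p)⁻`) the constant `((p+1)/p)^q` cannot be replaced by any smaller constant. -/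
theorem hardy_negative_exponent_sharp (p q d : ℝ) (hq : 0 < q) (hpq : q ≤ p)
    (hd : d ∈ Set.Ioo 0 (1 / p)) :
    (∫ x in (0 : ℝ)..1, ((1 / x) * ∫ y in (0 : ℝ)..x, y ^ d) ^ (-p)) =
        (d + 1) ^ q *
          ∫ x in (0 : ℝ)..1,
            ((1 / x) * ∫ y in (0 : ℝ)..x, y ^ d) ^ (-p + q) * (x ^ d) ^ (-q) ∧
      IntegrableOn (fun x : ℝ => ((1 / x) * ∫ y in (0 : ℝ)..x, y ^ d) ^ (-p))
        (Set.Ioc 0 1) ∧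
      IntegrableOn
        (fun x : ℝ => ((1 / x) * ∫ y in (0 : ℝ)..x, y ^ d) ^ (-p + q) * (x ^ d) ^ (-q))
        (Set.Ioc 0 1) ∧
      ∀ C : ℝ, 0 ≤ C →
        (∀ d' ∈ Set.Ioo (0 : ℝ) (1 / p),
          (∫ x in (0 : ℝ)..1, ((1 / x) * ∫ y in (0 : ℝ)..x, y ^ d') ^ (-p)) ≤
            C * ∫ x in (0 : ℝ)..1,
              ((1 / x) * ∫ y in (0 : ℝ)..x, y ^ d') ^ (-p + q) * (x ^ d') ^ (-q)) →
        ((p + 1) / p) ^ q ≤ C :=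
  hardy_negative_exponent_sharp_general p q d hq hd
end

section
/- Let q > 1 and 0 < a < q−1, and set M = (1/(a+1))·((q−1)/(q−1−a))^{q-1}. Then: (i) p_0 = a+1 is the unique solution in [1,q] of ((q−p_0)/(q−1))·(M·p_0)^{1/(q-1)} = 1; and (ii) the function f(t) = t^a satisfies the A_q condition with constant M on every interval (0,t), t ∈ (0,1], while f^{-1/(p_0−1)}(t) = t^{-1} is not integrable on (0,1). Hence in Theorem 3 the range (p_0, q] of exponents cannot be enlarged: the conclusion fails at p = p_0. -/
open MeasureTheory Set intervalIntegral

/-!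
With `r = 1/(q-1)`, the left side of the defining equation of `p₀` is a positive multiple of
`(q - p) p^r`, whose derivative `p^(r-1) (1 + r) (1 - p)` is negative on `(1, q)`; so the equation
has at most one root in `[1, q]`, and `M` is chosen exactly so that `a + 1` is that root.
For the weight `t^a` both averages over `(0, t)` are averages of powers, `t^a/(a+1)` and
`t^s/(s+1)` with `s = -a/(q-1)`, and the powers of `t` cancel in the `A_q` product, which is then
the constant `M` itself. Finally `f^(-1/(p₀-1)) = (t^a)^(-1/a) = t⁻¹`.
-/

noncomputable def muckenhouptProduct (f : ℝ → ℝ) (q t : ℝ) : ℝ :=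
  ((1 / t) * ∫ y in (0 : ℝ)..t, f y) * ((1 / t) * ∫ y in (0 : ℝ)..t, f y ^ (-(1 / (q - 1)))) ^ (q - 1)

theorem strictAntiOn_sub_mul_rpow_one_div_sub_one {q : ℝ} (hq : 1 < q) :
    StrictAntiOn (fun p => (q - p) * p ^ (1 / (q - 1))) (Icc 1 q) := by
  set r : ℝ := 1 / (q - 1) with hr
  have hr_pos : 0 < r := one_div_pos.mpr (by linarith)
  have hqr : q * r = r + 1 := by rw [hr]; field_simp [show q - 1 ≠ 0 by linarith]; ring
  apply strictAntiOn_of_deriv_neg (convex_Icc 1 q)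
  · exact (continuousOn_const.sub continuousOn_id).mul
      (continuousOn_id.rpow_const fun _ _ => Or.inr hr_pos.le)
  · intro x hx
    rw [interior_Icc] at hx
    have hx_pos : 0 < x := by linarith [hx.1]
    have hderiv : HasDerivAt (fun p => (q - p) * p ^ r)
        ((-1) * x ^ r + (q - x) * (r * x ^ (r - 1))) x :=
      ((hasDerivAt_id x).const_sub q).mul (Real.hasDerivAt_rpow_const (Or.inl hx_pos.ne'))
    have hxr : x ^ r = x ^ (r - 1) * x := by rw [← Real.rpow_add_one hx_pos.ne']; ring_nf
    rw [hderiv.deriv, hxr]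
    have : (q - x) * r - x < 0 := by nlinarith [hx.1]
    nlinarith [Real.rpow_pos_of_pos hx_pos (r - 1)]

theorem strictAntiOn_p0_equation {q M : ℝ} (hq : 1 < q) (hM : 0 < M) :
    StrictAntiOn (fun p => (q - p) / (q - 1) * (M * p) ^ (1 / (q - 1))) (Icc 1 q) := by
  have hform : ∀ p ∈ Icc (1 : ℝ) q, (q - p) / (q - 1) * (M * p) ^ (1 / (q - 1)) =
      M ^ (1 / (q - 1)) / (q - 1) * ((q - p) * p ^ (1 / (q - 1))) := fun p hp => by
    rw [Real.mul_rpow hM.le (by linarith [hp.1])]; ring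
  intro x hx y hy hxy
  simp only [hform x hx, hform y hy]
  exact mul_lt_mul_of_pos_left (strictAntiOn_sub_mul_rpow_one_div_sub_one hq hx hy hxy)
    (div_pos (Real.rpow_pos_of_pos hM _) (by linarith))

theorem p0_equation_at_add_one {q a : ℝ} (hq : 1 < q) (ha : -1 < a) (haq : a < q - 1) :
    (q - (a + 1)) / (q - 1) *
      ((1 / (a + 1)) * ((q - 1) / (q - 1 - a)) ^ (q - 1) * (a + 1)) ^ (1 / (q - 1)) = 1 := by
  have hqa : 0 < q - 1 - a := by linarith
  have hM : (1 / (a + 1)) * ((q - 1) / (q - 1 - a)) ^ (q - 1) * (a + 1) =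
      ((q - 1) / (q - 1 - a)) ^ (q - 1) := by
    field_simp [show a + 1 ≠ 0 by linarith]
  rw [hM, one_div, Real.rpow_rpow_inv (by positivity) (by linarith)]
  field_simp [show q - 1 ≠ 0 by linarith]
  ring

theorem one_div_mul_integral_rpow {s t : ℝ} (hs : -1 < s) (ht : 0 < t) :
    1 / t * ∫ y in (0 : ℝ)..t, y ^ s = t ^ s / (s + 1) := by
  rw [integral_rpow (Or.inl hs), Real.zero_rpow (by linarith), Real.rpow_add_one ht.ne']
  field_simp
  ring

theorem muckenhouptProduct_rpow {q a t : ℝ} (hq : 1 < q) (ha : -1 < a) (haq : a < q - 1)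
    (ht : 0 < t) :
    muckenhouptProduct (fun y => y ^ a) q t =
      (1 / (a + 1)) * ((q - 1) / (q - 1 - a)) ^ (q - 1) := by
  set s : ℝ := a * -(1 / (q - 1)) with hs
  have hq1 : 0 < q - 1 := by linarith
  have hqa : 0 < q - 1 - a := by linarith
  have hs_add_one : s + 1 = ((q - 1) / (q - 1 - a))⁻¹ := by rw [hs]; field_simp; ring
  have hs_gt : -1 < s := by
    have : 0 < s + 1 := by rw [hs_add_one]; positivity
    linarith
  have hinner : ∫ y in (0 : ℝ)..t, (y ^ a) ^ (-(1 / (q - 1))) = ∫ y in (0 : ℝ)..t, y ^ s :=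
    integral_congr fun y hy => by
      rw [uIcc_of_le ht.le] at hy
      exact (Real.rpow_mul hy.1 a _).symm
  have hpow : (t ^ s) ^ (q - 1) = t ^ (-a) := by
    rw [← Real.rpow_mul ht.le, hs]; congr 1; field_simp
  unfold muckenhouptProduct
  rw [hinner, one_div_mul_integral_rpow ha ht, one_div_mul_integral_rpow hs_gt ht,
    Real.div_rpow (by positivity) (by linarith), hpow, hs_add_one, Real.inv_rpow (by positivity),
    Real.rpow_neg ht.le]
  have : t ^ a ≠ 0 := (Real.rpow_pos_of_pos ht a).ne'
  field_simp

theorem rpow_rpow_neg_one_div {x a : ℝ} (hx : 0 ≤ x) (ha : a ≠ 0) :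
    (x ^ a) ^ (-(1 / a)) = x ^ (-1 : ℝ) := by
  rw [← Real.rpow_mul hx]; congr 1; field_simp

theorem not_integrableOn_Ioo_rpow_rpow_neg_one_div {a : ℝ} (ha : a ≠ 0) :
    ¬ IntegrableOn (fun t : ℝ => (t ^ a) ^ (-(1 / a))) (Ioo 0 1) := by
  rw [integrableOn_congr_fun (fun t ht => rpow_rpow_neg_one_div ht.1.le ha)
    measurableSet_Ioo, integrableOn_Ioo_rpow_iff one_pos]
  exact lt_irrefl _

/-- **Sharpness of Theorem 3.** Let `q > 1`, `0 < a < q−1` and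
`M = (1/(a+1))((q−1)/(q−1−a))^{q-1}`. Then (i) `p₀ = a+1` is the unique solution in
`[1,q]` of `((q−p₀)/(q−1))(M p₀)^{1/(q-1)} = 1`, and (ii) `f(t) = t^a` satisfies the
`A_q` condition with constant `M` on every `(0,t)`, `t ∈ (0,1]`, while
`f^{-1/(p₀−1)}(t) = t⁻¹` is not integrable on `(0,1)`; hence the range `(p₀,q]` in
Theorem 3 cannot be enlarged. -/
theorem muckenhoupt_sharpness (q a : ℝ) (hq : 1 < q) (ha : 0 < a)
    (haq : a < q - 1) :
    ((a + 1) ∈ Set.Icc 1 q ∧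
      ((q - (a + 1)) / (q - 1)) *
          (((1 / (a + 1)) * ((q - 1) / (q - 1 - a)) ^ (q - 1)) * (a + 1)) ^ (1 / (q - 1)) = 1 ∧
      (∀ p ∈ Set.Icc 1 q,
        ((q - p) / (q - 1)) *
            (((1 / (a + 1)) * ((q - 1) / (q - 1 - a)) ^ (q - 1)) * p) ^ (1 / (q - 1)) = 1 →
          p = a + 1)) ∧
    ((∀ t ∈ Set.Ioc (0 : ℝ) 1,
        ((1 / t) * ∫ y in (0 : ℝ)..t, y ^ a) *
            ((1 / t) * ∫ y in (0 : ℝ)..t, (y ^ a) ^ (-(1 / (q - 1)))) ^ (q - 1) ≤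
          (1 / (a + 1)) * ((q - 1) / (q - 1 - a)) ^ (q - 1)) ∧
      (∀ t ∈ Set.Ioo (0 : ℝ) 1, (t ^ a) ^ (-(1 / ((a + 1) - 1))) = t⁻¹) ∧
      ¬ IntegrableOn (fun t : ℝ => (t ^ a) ^ (-(1 / ((a + 1) - 1)))) (Set.Ioo 0 1)) := by
  have hp0 : a + 1 ∈ Icc 1 q := ⟨by linarith, by linarith⟩
  have heq := p0_equation_at_add_one hq (by linarith) haq
  have hM : 0 < (1 / (a + 1)) * ((q - 1) / (q - 1 - a)) ^ (q - 1) :=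
    mul_pos (by positivity) (Real.rpow_pos_of_pos (div_pos (by linarith) (by linarith)) _)
  rw [add_sub_cancel_right]
  refine ⟨⟨hp0, heq, fun p hp hpeq => ?_⟩, fun t ht => ?_, fun t ht => ?_,
    not_integrableOn_Ioo_rpow_rpow_neg_one_div ha.ne'⟩
  · exact (strictAntiOn_p0_equation hq hM).injOn hp hp0 (hpeq.trans heq.symm)
  · exact (muckenhouptProduct_rpow hq (by linarith) haq ht.1).le
  · rw [rpow_rpow_neg_one_div ht.1.le ha.ne', Real.rpow_neg_one]
end
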